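/- arXiv:2504.04828 — 4 statements merged into one kernel-verified Lean document; each statement's English description precedes it below -/
import Mathlib

section
/- Let c(n,k) be the number of Catalan words of length n avoiding (≥,≥) whose last letter equals k. Then for n ≥ 2: c(n+1, 0) = Σ_{j=0}^{n-2} c(n−1, j), and c(n+1, k+1) = c(n, k) + Σ_{j=k}^{n-2} c(n−1, j) for 0 ≤ k ≤ n−1, with initial values c(1,0) = c(2,0) = c(2,1) = 1. -/
open Finset

/-- `w` is a Catalan word: it starts with 0 (if nonempty) and each letter
exceeds the previous one by at most 1. -/
def IsCat (w : List ℕ) : Prop :=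
  (∀ a, w.head? = some a → a = 0) ∧ w.Chain' (fun a b => b ≤ a + 1)

/-- `w` avoids the pattern (≥,≥): no three consecutive letters `a b c` with `a ≥ b ≥ c`. -/
def AvoidGG (w : List ℕ) : Prop :=
  ∀ a b c : ℕ, [a, b, c] <:+: w → ¬(b ≤ a ∧ c ≤ b)

/-- The set of Catalan words of length `n` avoiding the pattern (≥,≥). -/
def CatGG (n : ℕ) : Set (List ℕ) :=
  {w | w.length = n ∧ IsCat w ∧ AvoidGG w}

/-- The `n`-th Motzkin number. -/
def motzkin (n : ℕ) : ℕ :=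
  (∑ i ∈ Finset.range (n + 2), Nat.choose (n + 1) i * Nat.choose (n + 1 - i) (i + 1)) / (n + 1)

/-- The `n`-th central trinomial coefficient. -/
def trin (n : ℕ) : ℕ :=
  ∑ k ∈ Finset.range (n + 1), Nat.choose n k * Nat.choose (n - k) k

/-- Semiperimeter of the bargraph of a Catalan word `w` (column heights `w i + 1`):
`n + h₁ + Σ max (hᵢ - hᵢ₋₁) 0`. -/
def sper (w : List ℕ) : ℕ :=
  w.length + (w.headD 0 + 1) + ((w.zip w.tail).map (fun p => p.2 - p.1)).sum

/-- Area of the bargraph of a Catalan word `w`: `Σ (w i + 1)`. -/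
def area (w : List ℕ) : ℕ := w.length + w.sum

/-- Number of interior points of the bargraph of a Catalan word `w`
(column heights `w i + 1`): `Σᵢ min (w (i-1)) (w i)`. -/
def interPts (w : List ℕ) : ℕ :=
  ((w.zip w.tail).map (fun p => min p.1 p.2)).sum

/-- `c(n,k)`: the number of (nonempty) Catalan words of length `n`
avoiding (≥,≥) whose last letter is `k`. -/
noncomputable def cCount (n k : ℕ) : ℕ :=
  {w | w ∈ CatGG n ∧ w.getLast? = some k}.ncard

-- snoc equality cancellation
lemma snoc_inj {u v : List ℕ} {x y : ℕ} (h : u ++ [x] = v ++ [y]) : u = v ∧ x = y := by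
  have := List.append_inj' h rfl
  simpa using this

lemma snoc2_suffix {a b a' b' : ℕ} {v : List ℕ} (h : [a,b] <:+ v ++ [a',b']) :
    a = a' ∧ b = b' := by
  obtain ⟨p, hp⟩ := h
  have h2 : (p ++ [a]) ++ [b] = (v ++ [a']) ++ [b'] := by simpa using hp
  obtain ⟨h3, h4⟩ := snoc_inj h2
  exact ⟨(snoc_inj h3).2, h4⟩

lemma suffix_getLast? {a b : ℕ} {u : List ℕ} (h : [a,b] <:+ u) : u.getLast? = some b := by
  obtain ⟨p, hp⟩ := h
  rw [← hp]
  rw [show p ++ [a,b] = (p ++ [a]) ++ [b] by simp]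
  exact List.getLast?_concat

lemma infix_snoc {a b c x : ℕ} {u : List ℕ} :
    [a,b,c] <:+: u ++ [x] ↔ [a,b,c] <:+: u ∨ ([a,b] <:+ u ∧ c = x) := by
  constructor
  · rintro ⟨p, q, hpq⟩
    rcases List.eq_nil_or_concat q with rfl | ⟨r, y, rfl⟩
    · simp only [List.append_nil] at hpq
      have h2 : (p ++ [a,b]) ++ [c] = u ++ [x] := by simpa using hpq
      obtain ⟨h3, h4⟩ := snoc_inj h2
      exact Or.inr ⟨⟨p, by simpa using h3⟩, h4⟩
    · rw [List.concat_eq_append] at hpq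
      have h2 : (p ++ [a,b,c] ++ r) ++ [y] = u ++ [x] := by simpa using hpq
      obtain ⟨h3, h4⟩ := snoc_inj h2
      exact Or.inl ⟨p, r, h3⟩
  · rintro (h | ⟨⟨p, hp⟩, rfl⟩)
    · exact h.trans (List.IsPrefix.isInfix ⟨[x], rfl⟩)
    · exact ⟨p, [], by simp [← hp]⟩

lemma avoid_snoc {u : List ℕ} {x : ℕ} (hu : AvoidGG u)
    (h : ∀ a b, [a,b] <:+ u → b ≤ a → ¬ x ≤ b) : AvoidGG (u ++ [x]) := by
  intro a b c hinf
  rcases infix_snoc.mp hinf with h1 | ⟨h1, rfl⟩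
  · exact hu a b c h1
  · rintro ⟨hba, hxb⟩; exact h a b h1 hba hxb

lemma avoid_of_infix {u w : List ℕ} (h : u <:+: w) (hw : AvoidGG w) : AvoidGG u :=
  fun a b c hi => hw a b c (hi.trans h)

lemma isCat_snoc {u : List ℕ} {x j : ℕ} (hu : IsCat u) (hj : u.getLast? = some j)
    (hx : x ≤ j + 1) : IsCat (u ++ [x]) := by
  have hne : u ≠ [] := by rintro rfl; simp at hj
  constructor
  · intro a ha
    rw [List.head?_append_of_ne_nil _ hne] at ha
    exact hu.1 a ha
  · unfold List.Chain'
    rw [List.isChain_append]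
    refine ⟨hu.2, List.isChain_singleton x, ?_⟩
    intro p hp y hy
    simp only [List.head?_cons, Option.mem_def, Option.some.injEq] at hy
    rw [Option.mem_def, hj, Option.some.injEq] at hp
    omega

lemma isCat_prefix {u w : List ℕ} (h : u <+: w) (hw : IsCat w) : IsCat u := by
  rcases u with _ | ⟨a, t⟩
  · exact ⟨by simp, List.isChain_nil⟩
  · refine ⟨?_, hw.2.prefix h⟩
    obtain ⟨q, hq⟩ := h
    intro b hb
    apply hw.1
    rw [← hq]
    simpa using hb

-- bound on entries
lemma chain_bound : ∀ (w : List ℕ) (m : ℕ), w.Chain' (fun a b => b ≤ a + 1) →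
    (∀ a ∈ w.head?, a ≤ m) → ∀ x ∈ w, x < m + w.length
  | [], _, _, _, x, hx => by simp at hx
  | a :: t, m, hc, hh, x, hx => by
    unfold List.Chain' at hc
    rw [List.isChain_cons] at hc
    rcases List.mem_cons.mp hx with rfl | hx'
    · have := hh x (by simp)
      simp only [List.length_cons]; omega
    · have ht := chain_bound t (m + 1) hc.2 (fun b hb => by
        have := hc.1 b hb
        have := hh a (by simp)
        omega) x hx'
      simp only [List.length_cons]; omega

lemma mem_lt {w : List ℕ} {n : ℕ} (h : w ∈ CatGG n) : ∀ x ∈ w, x < n := by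
  intro x hx
  have := chain_bound w 0 h.2.1.2 (fun a ha => by
    have := h.2.1.1 a ha; omega) x hx
  rw [h.1] at this; omega

lemma catGG_finite (n : ℕ) : (CatGG n).Finite := by
  have hfin : {l : List (Fin (n+1)) | l.length = n}.Finite := List.finite_length_eq _ n
  apply Set.Finite.subset (hfin.image (List.map Fin.val))
  intro w hw
  have hb : ∀ x ∈ w, x < n + 1 := fun x hx => (mem_lt hw x hx).trans (Nat.lt_succ_self n)
  refine ⟨w.pmap (fun a h => (⟨a, h⟩ : Fin (n+1))) hb, by simp [hw.1], ?_⟩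
  rw [List.map_pmap]
  exact List.pmap_eq_map (f := id) (l := w) hb |>.trans (List.map_id w)

lemma eq_dropLast_append {u : List ℕ} {j : ℕ} (hj : u.getLast? = some j) :
    u = u.dropLast ++ [j] := by
  have hne : u ≠ [] := by rintro rfl; simp at hj
  have h0 := List.getLast?_eq_getLast hne
  rw [hj] at h0
  have h1 : u.getLast hne = j := (Option.some_inj.mp h0).symm
  conv_lhs => rw [← List.dropLast_append_getLast hne]
  rw [h1]

lemma getLast?_isSome {w : List ℕ} (h : w ≠ []) : ∃ j, w.getLast? = some j :=
  ⟨w.getLast h, List.getLast?_eq_getLast h⟩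

lemma ne_nil_of_mem_CatGG {w : List ℕ} {n : ℕ} (h : w ∈ CatGG (n+1)) : w ≠ [] := by
  intro hw; rw [hw] at h; exact absurd h.1 (by simp)

/-- appending `j+1` after a word ending in `j` stays in the class -/
lemma step_up {u : List ℕ} {m j : ℕ} (hu : u ∈ CatGG m) (hj : u.getLast? = some j) :
    u ++ [j+1] ∈ CatGG (m+1) := by
  refine ⟨by simp [hu.1], isCat_snoc hu.2.1 hj le_rfl, ?_⟩
  apply avoid_snoc hu.2.2
  intro a b hab hba
  have h2 := suffix_getLast? hab
  rw [hj, Option.some_inj] at h2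
  omega

/-- appending any `x ≤ j+2` after a word ending in the ascent `j, j+1` stays in the class -/
lemma step_after_up {u : List ℕ} {m j x : ℕ} (hu : u ++ [j+1] ∈ CatGG m)
    (hj : u.getLast? = some j) (hx : x ≤ j + 2) : (u ++ [j+1]) ++ [x] ∈ CatGG (m+1) := by
  have hne : u ≠ [] := by rintro rfl; simp at hj
  refine ⟨by have := hu.1; simp at this ⊢; omega,
    isCat_snoc hu.2.1 (by rw [List.getLast?_concat]) (by omega), ?_⟩
  apply avoid_snoc hu.2.2
  intro a b hab hba
  have hu' : u ++ [j+1] = u.dropLast ++ [j, j+1] := by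
    conv_lhs => rw [eq_dropLast_append hj]
    simp
  rw [hu'] at hab
  obtain ⟨rfl, rfl⟩ := snoc2_suffix hab
  omega

lemma decomp2 {w : List ℕ} (h : 2 ≤ w.length) : ∃ u a b, w = u ++ [a, b] := by
  have h1 : w ≠ [] := by rintro rfl; simp at h
  have h2 : w.dropLast ≠ [] := by
    intro hd
    have := List.length_dropLast (xs := w)
    rw [hd] at this; simp at this; omega
  refine ⟨w.dropLast.dropLast, w.dropLast.getLast h2, w.getLast h1, ?_⟩
  conv_lhs => rw [← List.dropLast_append_getLast h1]
  conv_lhs => rw [← List.dropLast_append_getLast h2]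
  simp

/-- deconstruction: data extracted from `u ++ [a, b] ∈ CatGG (n+2)` -/
lemma destep {u : List ℕ} {n a b : ℕ} (h : u ++ [a, b] ∈ CatGG (n+2)) :
    u ∈ CatGG n ∧ u ++ [a] ∈ CatGG (n+1) ∧ b ≤ a + 1 ∧
    (∀ j, u.getLast? = some j → a ≤ j + 1 ∧ ¬(a ≤ j ∧ b ≤ a)) := by
  have hlen : u.length = n := by have := h.1; simp at this; omega
  have hpre1 : u <+: u ++ [a, b] := ⟨[a, b], rfl⟩
  have hpre2 : u ++ [a] <+: u ++ [a, b] := ⟨[b], by simp⟩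
  have hinf1 : u <:+: u ++ [a, b] := hpre1.isInfix
  have hinf2 : u ++ [a] <:+: u ++ [a, b] := hpre2.isInfix
  refine ⟨⟨hlen, isCat_prefix hpre1 h.2.1, avoid_of_infix hinf1 h.2.2⟩,
    ⟨by simp [hlen], isCat_prefix hpre2 h.2.1, avoid_of_infix hinf2 h.2.2⟩, ?_, ?_⟩
  · have hc := h.2.1.2
    unfold List.Chain' at hc
    rw [show u ++ [a, b] = (u ++ [a]) ++ [b] by simp, List.isChain_append] at hc
    have := hc.2.2 a (by rw [List.getLast?_concat]; rfl) b (by rfl)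
    exact this
  · intro j hj
    have hne : u ≠ [] := by rintro rfl; simp at hj
    have hu' : u = u.dropLast ++ [j] := eq_dropLast_append hj
    constructor
    · have hc := h.2.1.2
      unfold List.Chain' at hc
      rw [List.isChain_append] at hc
      have := hc.2.2 j (by rw [hj]; rfl) a (by rfl)
      exact this
    · have : [j, a, b] <:+: u ++ [a, b] := by
        rw [hu']
        exact ⟨u.dropLast, [], by simp⟩
      exact h.2.2 j a b this

lemma getLast?_eq_iff {w : List ℕ} (h : w ≠ []) (j : ℕ) :
    w.getLast? = some j ↔ w.getLastD 0 = j := by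
  rw [List.getLastD_eq_getLast?, List.getLast?_eq_getLast h]
  simp

lemma getLastD_mem {w : List ℕ} (h : w ≠ []) : w.getLastD 0 ∈ w := by
  rw [List.getLastD_eq_getLast?, List.getLast?_eq_getLast h]
  exact List.getLast_mem h

lemma getLastD_lt {w : List ℕ} {n : ℕ} (h : w ∈ CatGG (n+1)) : w.getLastD 0 < n + 1 :=
  mem_lt h _ (getLastD_mem (ne_nil_of_mem_CatGG h))

lemma cCount_eq_card (n j : ℕ) :
    cCount (n+1) j
      = ((catGG_finite (n+1)).toFinset.filter (fun w => w.getLastD 0 = j)).card := by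
  rw [cCount, ← Set.ncard_coe_finset]
  congr 1
  ext w
  simp only [Finset.coe_filter, Set.Finite.mem_toFinset, Set.mem_setOf_eq]
  exact and_congr_right fun hw => getLast?_eq_iff (ne_nil_of_mem_CatGG hw) j

lemma sum_fibers (n : ℕ) (F : Finset ℕ) :
    ∑ j ∈ F, cCount (n+1) j
      = {w | w ∈ CatGG (n+1) ∧ w.getLastD 0 ∈ F}.ncard := by
  set T := (catGG_finite (n+1)).toFinset with hT
  have h1 : {w | w ∈ CatGG (n+1) ∧ w.getLastD 0 ∈ F}
      = ↑(T.filter (fun w => w.getLastD 0 ∈ F)) := by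
    ext w
    simp [hT]
  rw [h1, Set.ncard_coe_finset]
  have h2 := Finset.card_eq_sum_card_fiberwise (s := T.filter (fun w => w.getLastD 0 ∈ F))
    (t := F) (f := fun w => w.getLastD 0) (fun w hw => (Finset.mem_filter.mp hw).2)
  rw [h2]
  apply Finset.sum_congr rfl
  intro j hj
  rw [cCount_eq_card]
  rw [Finset.filter_filter]
  congr 1
  apply Finset.filter_congr
  intro w _
  constructor
  · rintro h9; simp only [h9]; exact ⟨hj, trivial⟩
  · rintro ⟨_, h9⟩; exact h9

lemma sum_range (m : ℕ) :
    ∑ j ∈ Finset.range (m+1), cCount (m+1) j = (CatGG (m+1)).ncard := by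
  rw [sum_fibers]
  congr 1
  ext w
  simp only [Set.mem_setOf_eq, Finset.mem_range]
  exact ⟨fun h => h.1, fun h => ⟨h, getLastD_lt h⟩⟩

lemma sum_Icc (m k : ℕ) :
    ∑ j ∈ Finset.Icc k m, cCount (m+1) j
      = {w | w ∈ CatGG (m+1) ∧ k ≤ w.getLastD 0}.ncard := by
  rw [sum_fibers]
  congr 1
  ext w
  simp only [Set.mem_setOf_eq, Finset.mem_Icc]
  constructor
  · rintro ⟨h1, h2, _⟩; exact ⟨h1, h2⟩
  · rintro ⟨h1, h2⟩
    exact ⟨h1, h2, by have := getLastD_lt h1; omega⟩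

lemma getLast?_snoc2 (u : List ℕ) (a b : ℕ) : (u ++ [a, b]).getLast? = some b := by
  rw [show u ++ [a, b] = (u ++ [a]) ++ [b] by simp, List.getLast?_concat]

lemma setA (m : ℕ) :
    {w | w ∈ CatGG (m+3) ∧ w.getLast? = some 0}
      = (fun u => u ++ [u.getLastD 0 + 1, 0]) '' CatGG (m+1) := by
  ext w
  constructor
  · rintro ⟨hw, hl⟩
    obtain ⟨u, a, b, rfl⟩ := decomp2 (by rw [hw.1]; omega)
    rw [getLast?_snoc2, Option.some_inj] at hl
    subst hl
    obtain ⟨hu, _, _, hlast⟩ := destep hw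
    obtain ⟨j, hj⟩ := getLast?_isSome (ne_nil_of_mem_CatGG hu)
    obtain ⟨hle, hnot⟩ := hlast j hj
    have ha : a = j + 1 := by omega
    refine ⟨u, hu, ?_⟩
    simp only
    rw [(getLast?_eq_iff (ne_nil_of_mem_CatGG hu) j).mp hj, ha]
  · rintro ⟨u, hu, rfl⟩
    obtain ⟨j, hj⟩ := getLast?_isSome (ne_nil_of_mem_CatGG hu)
    have hD : u.getLastD 0 = j := (getLast?_eq_iff (ne_nil_of_mem_CatGG hu) j).mp hj
    simp only [hD]
    have h1 := step_up hu hj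
    have h2 := step_after_up (x := 0) h1 hj (by omega)
    constructor
    · rw [show u ++ [j+1, 0] = (u ++ [j+1]) ++ [0] by simp]
      exact h2
    · exact getLast?_snoc2 u _ _

lemma injOn_snoc2 (f : List ℕ → ℕ) (y : ℕ) (S : Set (List ℕ)) :
    Set.InjOn (fun u => u ++ [f u + 1, y]) S := by
  intro u1 _ u2 _ h
  simp only at h
  rw [show u1 ++ [f u1 + 1, y] = (u1 ++ [f u1 + 1]) ++ [y] by simp,
    show u2 ++ [f u2 + 1, y] = (u2 ++ [f u2 + 1]) ++ [y] by simp] at h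
  exact (snoc_inj (snoc_inj h).1).1

lemma setB (m k : ℕ) :
    {w | w ∈ CatGG (m+3) ∧ w.getLast? = some (k+1)}
      = (fun u => u ++ [k+1]) '' {u | u ∈ CatGG (m+2) ∧ u.getLast? = some k}
        ∪ (fun u => u ++ [u.getLastD 0 + 1, k+1]) ''
            {u | u ∈ CatGG (m+1) ∧ k ≤ u.getLastD 0} := by
  ext w
  constructor
  · rintro ⟨hw, hl⟩
    obtain ⟨u, a, b, rfl⟩ := decomp2 (by rw [hw.1]; omega)
    rw [getLast?_snoc2, Option.some_inj] at hl
    subst hl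
    obtain ⟨hu, hu1, hba, hlast⟩ := destep hw
    obtain ⟨j, hj⟩ := getLast?_isSome (ne_nil_of_mem_CatGG hu)
    obtain ⟨hle, hnot⟩ := hlast j hj
    have hD : u.getLastD 0 = j := (getLast?_eq_iff (ne_nil_of_mem_CatGG hu) j).mp hj
    by_cases hak : a = k
    · subst hak
      left
      exact ⟨u ++ [a], ⟨hu1, List.getLast?_concat⟩, by simp⟩
    · right
      have hka : k + 1 ≤ a := by omega
      have haj : a = j + 1 := by omega
      refine ⟨u, ⟨hu, by omega⟩, ?_⟩
      simp only [hD, haj]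
  · rintro (⟨u, ⟨hu, hl⟩, rfl⟩ | ⟨u, ⟨hu, hk⟩, rfl⟩)
    · exact ⟨step_up hu hl, List.getLast?_concat⟩
    · obtain ⟨j, hj⟩ := getLast?_isSome (ne_nil_of_mem_CatGG hu)
      have hD : u.getLastD 0 = j := (getLast?_eq_iff (ne_nil_of_mem_CatGG hu) j).mp hj
      rw [hD] at hk
      have h1 := step_up hu hj
      have h2 := step_after_up (x := k+1) h1 hj (by omega)
      simp only [Set.mem_setOf_eq, hD]
      constructor
      · rw [show u ++ [j+1, k+1] = (u ++ [j+1]) ++ [k+1] by simp]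
        exact h2
      · exact getLast?_snoc2 u _ _

lemma disjB (m k : ℕ) :
    Disjoint ((fun u => u ++ [k+1]) '' {u | u ∈ CatGG (m+2) ∧ u.getLast? = some k})
      ((fun u => u ++ [u.getLastD 0 + 1, k+1]) ''
        {u | u ∈ CatGG (m+1) ∧ k ≤ u.getLastD 0}) := by
  rw [Set.disjoint_left]
  rintro w ⟨u1, ⟨_, hl1⟩, rfl⟩ ⟨u2, ⟨hu2, hk2⟩, heq⟩
  simp only at heq
  rw [show u2 ++ [u2.getLastD 0 + 1, k+1] = (u2 ++ [u2.getLastD 0 + 1]) ++ [k+1] by simp] at heq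
  have h1 := (snoc_inj heq).1
  rw [← h1, List.getLast?_concat, Option.some_inj] at hl1
  omega

lemma catGG_one : {w | w ∈ CatGG 1 ∧ w.getLast? = some 0} = {[0]} := by
  ext w
  simp only [Set.mem_setOf_eq, Set.mem_singleton_iff]
  constructor
  · rintro ⟨hw, hl⟩
    obtain ⟨a, rfl⟩ := List.length_eq_one_iff.mp hw.1
    have := hw.2.1.1 a (by simp)
    subst this; rfl
  · rintro rfl
    refine ⟨⟨rfl, ⟨fun a ha => by simpa using ha.symm, List.isChain_singleton _⟩, ?_⟩, rfl⟩
    intro a b c h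
    have := h.length_le
    simp at this

lemma catGG_two (b : ℕ) (hb : b ≤ 1) :
    {w | w ∈ CatGG 2 ∧ w.getLast? = some b} = {[0, b]} := by
  ext w
  simp only [Set.mem_setOf_eq, Set.mem_singleton_iff]
  constructor
  · rintro ⟨hw, hl⟩
    obtain ⟨x, y, rfl⟩ := List.length_eq_two.mp hw.1
    have hx := hw.2.1.1 x (by simp)
    have hy : y = b := by
      rw [show [x, y] = [x] ++ [y] by simp, List.getLast?_concat, Option.some_inj] at hl
      exact hl
    rw [hx, hy]
  · rintro rfl
    refine ⟨⟨rfl, ⟨fun a ha => by simpa using ha.symm, ?_⟩, ?_⟩, ?_⟩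
    · exact List.isChain_pair.mpr (by omega)
    · intro a b c h
      have := h.length_le
      simp at this
    · rw [show [0, b] = [0] ++ [b] by simp, List.getLast?_concat]

theorem cCount_recurrence :
    cCount 1 0 = 1 ∧ cCount 2 0 = 1 ∧ cCount 2 1 = 1 ∧
    ∀ n : ℕ, 2 ≤ n →
      (cCount (n + 1) 0 = ∑ j ∈ Finset.range (n - 1), cCount (n - 1) j) ∧
      ∀ k : ℕ, k ≤ n - 1 →
        cCount (n + 1) (k + 1)
          = cCount n k + ∑ j ∈ Finset.Icc k (n - 2), cCount (n - 1) j := by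
  refine ⟨?_, ?_, ?_, ?_⟩
  · simp only [cCount]; rw [catGG_one, Set.ncard_singleton]
  · simp only [cCount]; rw [catGG_two 0 (by omega), Set.ncard_singleton]
  · simp only [cCount]; rw [catGG_two 1 le_rfl, Set.ncard_singleton]
  · intro n hn
    obtain ⟨m, rfl⟩ : ∃ m, n = m + 2 := ⟨n - 2, by omega⟩
    constructor
    · show cCount (m+3) 0 = ∑ j ∈ Finset.range (m+1), cCount (m+1) j
      rw [sum_range]
      simp only [cCount]
      rw [setA,
        Set.ncard_image_of_injOn (injOn_snoc2 (fun u => u.getLastD 0) 0 _)]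
    · intro k hk
      show cCount (m+3) (k+1) = cCount (m+2) k + ∑ j ∈ Finset.Icc k m, cCount (m+1) j
      have fin1 : ((fun u => u ++ [k+1]) ''
          {u | u ∈ CatGG (m+2) ∧ u.getLast? = some k}).Finite :=
        Set.Finite.image _ ((catGG_finite (m+2)).subset fun w hw => hw.1)
      have fin2 : ((fun u => u ++ [u.getLastD 0 + 1, k+1]) ''
          {u | u ∈ CatGG (m+1) ∧ k ≤ u.getLastD 0}).Finite :=
        Set.Finite.image _ ((catGG_finite (m+1)).subset fun w hw => hw.1)
      have hL : cCount (m+3) (k+1)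
          = {w | w ∈ CatGG (m+3) ∧ w.getLast? = some (k+1)}.ncard := rfl
      rw [hL, setB m k, Set.ncard_union_eq (disjB m k) fin1 fin2]
      congr 1
      · rw [Set.ncard_image_of_injOn (fun u1 _ u2 _ h => (snoc_inj h).1)]
        rfl
      · rw [Set.ncard_image_of_injOn (injOn_snoc2 (fun u => u.getLastD 0) (k+1) _), sum_Icc]
end

section
/- The sequence u(n) of total areas over all (≥,≥)-polyominoes of length n begins 1, 5, 19, 66, 218, 701, 2215, 6919, 21438, 66034 for n = 1,...,10. -/
open Finset

/-- Generator of reversed Catalan words. -/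
def genR : ℕ → List (List ℕ)
  | 0 => [[]]
  | 1 => [[0]]
  | n + 2 => (genR (n + 1)).flatMap (fun r => (List.range (r.headD 0 + 2)).map (· :: r))

/-- Boolean check that a word avoids the pattern (≥,≥). -/
def avB : List ℕ → Bool
  | a :: b :: c :: t => (!(decide (b ≤ a) && decide (c ≤ b))) && avB (b :: c :: t)
  | _ => true

/-- Explicit list of Catalan words of length `n` avoiding (≥,≥). -/
def wordsL (n : ℕ) : List (List ℕ) := ((genR n).map List.reverse).filter avB

lemma mem_genR : ∀ (n : ℕ) (r : List ℕ), r ∈ genR (n + 1) ↔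
    r.length = n + 1 ∧ r.getLast? = some 0 ∧ r.Chain' (fun a b => a ≤ b + 1)
  | 0, r => by
    constructor
    · intro h
      simp only [genR, List.mem_singleton] at h
      subst h; simp; exact List.isChain_singleton _
    · rintro ⟨hl, hlast, -⟩
      match r, hl with
      | [a], _ =>
        simp only [List.getLast?_singleton, Option.some_inj] at hlast
        subst hlast; simp [genR]
  | n + 1, r => by
    constructor
    · intro h
      simp only [genR, List.mem_flatMap, List.mem_map, List.mem_range] at h
      obtain ⟨s, hs, c, hc, rfl⟩ := h
      obtain ⟨hl, hlast, hch⟩ := (mem_genR n s).1 hs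
      obtain ⟨b, t, rfl⟩ : ∃ b t, s = b :: t := by
        cases s with
        | nil => simp at hl
        | cons b t => exact ⟨b, t, rfl⟩
      refine ⟨by simpa using hl, ?_, ?_⟩
      · rw [List.getLast?_cons_cons]; exact hlast
      · exact List.isChain_cons_cons.2 ⟨by simpa using Nat.lt_succ_iff.1 hc, hch⟩
    · rintro ⟨hl, hlast, hch⟩
      obtain ⟨c, b, t, rfl⟩ : ∃ c b t, r = c :: b :: t := by
        cases r with
        | nil => simp at hl
        | cons c s =>
          cases s with
          | nil => simp at hl
          | cons b t => exact ⟨c, b, t, rfl⟩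
      obtain ⟨h1, h2⟩ := List.isChain_cons_cons.1 hch
      simp only [genR, List.mem_flatMap, List.mem_map, List.mem_range]
      refine ⟨b :: t, (mem_genR n _).2 ⟨by simpa using hl, ?_, h2⟩, c, ?_, rfl⟩
      · rw [List.getLast?_cons_cons] at hlast; exact hlast
      · exact Nat.lt_succ_iff.2 h1

lemma avoidGG_short (w : List ℕ) (h : w.length ≤ 2) : AvoidGG w := by
  intro a b c hinf
  have := hinf.length_le
  simp only [List.length_cons, List.length_nil] at this
  omega

lemma avoidGG_cons₃ (a b c : ℕ) (t : List ℕ) :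
    AvoidGG (a :: b :: c :: t) ↔ ¬(b ≤ a ∧ c ≤ b) ∧ AvoidGG (b :: c :: t) := by
  constructor
  · intro h
    refine ⟨h a b c ⟨[], t, rfl⟩, fun x y z hinf => h x y z (hinf.trans ⟨[a], [], by simp⟩)⟩
  · rintro ⟨hn, h⟩ x y z hinf
    rcases List.infix_cons_iff.1 hinf with hp | hi
    · obtain ⟨h1, hp⟩ := List.cons_prefix_cons.1 hp
      obtain ⟨h2, hp⟩ := List.cons_prefix_cons.1 hp
      obtain ⟨h3, -⟩ := List.cons_prefix_cons.1 hp
      subst h1; subst h2; subst h3; exact hn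
    · exact h x y z hi

lemma avB_iff : ∀ w : List ℕ, avB w = true ↔ AvoidGG w
  | [] => by simpa [avB] using avoidGG_short [] (by simp)
  | [a] => by simpa [avB] using avoidGG_short [a] (by simp)
  | [a, b] => by simpa [avB] using avoidGG_short [a, b] (by simp)
  | a :: b :: c :: t => by
    have ih := avB_iff (b :: c :: t)
    rw [avoidGG_cons₃, ← ih]
    simp only [avB, Bool.and_eq_true, Bool.not_eq_true', Bool.and_eq_false_iff,
      decide_eq_false_iff_not, decide_eq_true_eq, not_and_or]

lemma mem_wordsL (n : ℕ) (w : List ℕ) : w ∈ wordsL (n + 1) ↔ w ∈ CatGG (n + 1) := by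
  simp only [wordsL, List.mem_filter, List.mem_map, avB_iff, CatGG, Set.mem_setOf_eq]
  constructor
  · rintro ⟨⟨r, hr, rfl⟩, hav⟩
    obtain ⟨hl, hlast, hch⟩ := (mem_genR n r).1 hr
    refine ⟨by simp [hl], ⟨?_, ?_⟩, hav⟩
    · intro a ha
      rw [List.head?_reverse, hlast] at ha
      exact (Option.some_inj.1 ha).symm
    · exact List.isChain_reverse.2 hch
  · rintro ⟨hl, ⟨hhead, hch⟩, hav⟩
    refine ⟨⟨w.reverse, (mem_genR n _).2 ⟨by simp [hl], ?_, ?_⟩, by simp⟩, hav⟩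
    · rw [List.getLast?_reverse]
      cases w with
      | nil => simp at hl
      | cons x t => simp [hhead x rfl]
    · exact List.isChain_reverse.2 hch

lemma nodup_genR : ∀ n, (genR (n + 1)).Nodup
  | 0 => by simp [genR]
  | n + 1 => by
    rw [show genR (n + 2) =
        (genR (n + 1)).flatMap (fun r => (List.range (r.headD 0 + 2)).map (· :: r)) from rfl]
    refine List.nodup_flatMap.2 ⟨fun r _ => ?_, ?_⟩
    · exact List.nodup_range.map (fun a b h => by simpa using h)
    · refine (nodup_genR n).imp (fun {a b} hne => ?_)
      intro x hx1 hx2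
      simp only [List.mem_map, List.mem_range] at hx1 hx2
      obtain ⟨c, -, rfl⟩ := hx1
      obtain ⟨c', -, h⟩ := hx2
      injection h with h1 h2
      exact hne h2.symm

lemma nodup_wordsL (n : ℕ) : (wordsL (n + 1)).Nodup :=
  ((nodup_genR n).map List.reverse_injective).filter _

lemma sum_CatGG (n : ℕ) :
    (∑ᶠ w ∈ CatGG (n + 1), area w) = ((wordsL (n + 1)).map area).sum := by
  have hset : CatGG (n + 1) = ↑(wordsL (n + 1)).toFinset := by
    ext w
    simp only [Finset.coe_sort_coe, Finset.mem_coe, List.mem_toFinset, mem_wordsL]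
  rw [hset, finsum_mem_coe_finset, List.sum_toFinset _ (nodup_wordsL n)]

set_option maxRecDepth 100000 in
set_option maxHeartbeats 4000000 in
theorem total_area_values :
    (∑ᶠ w ∈ CatGG 1, area w) = 1 ∧
    (∑ᶠ w ∈ CatGG 2, area w) = 5 ∧
    (∑ᶠ w ∈ CatGG 3, area w) = 19 ∧
    (∑ᶠ w ∈ CatGG 4, area w) = 66 ∧
    (∑ᶠ w ∈ CatGG 5, area w) = 218 ∧
    (∑ᶠ w ∈ CatGG 6, area w) = 701 ∧
    (∑ᶠ w ∈ CatGG 7, area w) = 2215 ∧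
    (∑ᶠ w ∈ CatGG 8, area w) = 6919 ∧
    (∑ᶠ w ∈ CatGG 9, area w) = 21438 ∧
    (∑ᶠ w ∈ CatGG 10, area w) = 66034 := by
  refine ⟨(sum_CatGG 0).trans (by decide +kernel), (sum_CatGG 1).trans (by decide +kernel),
    (sum_CatGG 2).trans (by decide +kernel), (sum_CatGG 3).trans (by decide +kernel),
    (sum_CatGG 4).trans (by decide +kernel), (sum_CatGG 5).trans (by decide +kernel),
    (sum_CatGG 6).trans (by decide +kernel), (sum_CatGG 7).trans (by decide +kernel),
    (sum_CatGG 8).trans (by decide +kernel), (sum_CatGG 9).trans (by decide +kernel)⟩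
end

section
/- There is a length-preserving and area-preserving bijection ψ from the set of Catalan words avoiding (≥,≥) that do not end with a factor ab with a ≥ b, onto the set of Catalan words with no two equal consecutive letters ((≠)-Catalan words) of the same length. -/
open Finset

/-- The set of Catalan words of length `n` with no two equal adjacent letters. -/
def NeqCat (n : ℕ) : Set (List ℕ) :=
  {w | w.length = n ∧ IsCat w ∧ w.Chain' (· ≠ ·)}

/-- Catalan words of length `n` avoiding (≥,≥) that do not end with a factor
`a b` with `a ≥ b`. -/
def BSet (n : ℕ) : Set (List ℕ) :=
  {w | w ∈ CatGG n ∧ ∀ a b : ℕ, [a, b] <:+ w → a < b}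

def GoodB (w : List ℕ) : Prop := IsCat w ∧ AvoidGG w ∧ ∀ a b : ℕ, [a, b] <:+ w → a < b
def GoodN (w : List ℕ) : Prop := IsCat w ∧ w.Chain' (· ≠ ·)

def psi : List ℕ → List ℕ
  | [] => []
  | _ :: t =>
    if (t.takeWhile (· != 0)).isEmpty then psi (t.dropWhile (· != 0)) ++ [0]
    else 0 :: ((psi ((t.takeWhile (· != 0)).map (· - 1))).map (· + 1) ++ psi (t.dropWhile (· != 0)))
termination_by w => w.length
decreasing_by
  all_goals simp only [List.length_map, List.length_cons]
  all_goals first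
    | exact Nat.lt_succ_of_le (List.Sublist.length_le (List.dropWhile_sublist _))
    | exact Nat.lt_succ_of_le (List.Sublist.length_le (List.takeWhile_sublist _))

def phi : List ℕ → List ℕ
  | [] => []
  | a :: t =>
    if (a :: t).getLast? = some 0 then 0 :: phi (a :: t).dropLast
    else 0 :: ((phi ((t.takeWhile (· != 0)).map (· - 1))).map (· + 1) ++ phi (t.dropWhile (· != 0)))
termination_by w => w.length
decreasing_by
  all_goals simp only [List.length_map, List.length_cons, List.length_dropLast]
  · omega
  all_goals first
    | exact Nat.lt_succ_of_le (List.Sublist.length_le (List.dropWhile_sublist _))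
    | exact Nat.lt_succ_of_le (List.Sublist.length_le (List.takeWhile_sublist _))

lemma psi_nil : psi [] = [] := by simp [psi]

lemma psi_cons_empty (a : ℕ) (t : List ℕ) (h : t.takeWhile (· != 0) = []) :
    psi (a :: t) = psi t ++ [0] := by
  have hd : t.dropWhile (· != 0) = t := by
    conv_rhs => rw [← List.takeWhile_append_dropWhile (p := (· != 0)) (l := t), h]
    simp
  simp [psi, h, hd]

lemma psi_cons (a : ℕ) (t : List ℕ) (h : t.takeWhile (· != 0) ≠ []) :
    psi (a :: t) = 0 :: ((psi ((t.takeWhile (· != 0)).map (· - 1))).map (· + 1)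
      ++ psi (t.dropWhile (· != 0))) := by
  simp [psi, h]

lemma phi_nil : phi [] = [] := by simp [phi]

lemma phi_last0 (a : ℕ) (t : List ℕ) (h : (a :: t).getLast? = some 0) :
    phi (a :: t) = 0 :: phi (a :: t).dropLast := by
  simp [phi, h]

lemma phi_cons (a : ℕ) (t : List ℕ) (h : (a :: t).getLast? ≠ some 0) :
    phi (a :: t) = 0 :: ((phi ((t.takeWhile (· != 0)).map (· - 1))).map (· + 1)
      ++ phi (t.dropWhile (· != 0))) := by
  simp [phi, h]


section helpers
variable {α : Type*}

theorem List.chain'_cons' {R : α → α → Prop} {x : α} {l : List α} :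
    List.Chain' R (x :: l) ↔ (∀ y ∈ l.head?, R x y) ∧ List.Chain' R l := List.isChain_cons

theorem List.chain'_cons {R : α → α → Prop} {x y : α} {l : List α} :
    List.Chain' R (x :: y :: l) ↔ R x y ∧ List.Chain' R (y :: l) := List.isChain_cons_cons

theorem List.chain'_append {R : α → α → Prop} {l₁ l₂ : List α} :
    List.Chain' R (l₁ ++ l₂) ↔ List.Chain' R l₁ ∧ List.Chain' R l₂ ∧
      ∀ x ∈ l₁.getLast?, ∀ y ∈ l₂.head?, R x y := List.isChain_append

theorem List.chain'_map {β : Type*} {R : α → α → Prop} (f : β → α) {l : List β} :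
    List.Chain' R (l.map f) ↔ List.Chain' (fun a b => R (f a) (f b)) l := List.isChain_map f

@[simp] theorem List.chain'_nil {R : α → α → Prop} : List.Chain' R [] := List.isChain_nil

@[simp] theorem List.chain'_singleton {R : α → α → Prop} (a : α) : List.Chain' R [a] :=
  List.isChain_singleton a

lemma infix_append_split {w A B : List α} (h : w <:+: A ++ B) :
    w <:+: A ∨ w <:+: B ∨
      ∃ s t : List α, w = s ++ t ∧ s ≠ [] ∧ t ≠ [] ∧ s <:+ A ∧ t <+: B := by
  obtain ⟨p, q, e⟩ := h
  rcases le_or_gt (p.length + w.length) A.length with hle | hgt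
  · left
    have hpw : p ++ w <+: A ++ B := ⟨q, by simpa [List.append_assoc] using e⟩
    obtain ⟨r, hr⟩ := List.prefix_of_prefix_length_le hpw (List.prefix_append A B)
      (by simpa using hle)
    exact ⟨p, r, hr⟩
  · rcases le_or_gt A.length p.length with hA | hA
    · refine Or.inr (Or.inl ?_)
      have hwq : w ++ q <:+ A ++ B := ⟨p, by simpa [List.append_assoc] using e⟩
      have hlen : (w ++ q).length ≤ B.length := by
        have := congrArg List.length e
        simp [List.length_append] at this ⊢
        omega
      obtain ⟨r, hr⟩ := List.suffix_of_suffix_length_le hwq (List.suffix_append A B) hlen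
      exact ⟨r, q, by simpa [List.append_assoc] using hr⟩
    · right; right
      have hk : A.length - p.length < w.length := by omega
      set k := A.length - p.length with hkdef
      have hkpos : 0 < k := by omega
      have htk : A = p ++ w.take k := by
        have := congrArg (List.take A.length) e
        rw [List.take_left' rfl,
          List.take_append_of_le_length (by simp only [List.length_append]; omega),
          List.take_append, List.take_of_length_le (by omega)] at this
        exact this.symm
      have hdk : B = w.drop k ++ q := by
        have := congrArg (List.drop A.length) e
        rw [List.drop_left, List.drop_append,
          List.drop_append, List.drop_eq_nil_of_le (le_of_lt hA)] at this
        have h0 : A.length - (p ++ w).length = 0 := by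
          simp only [List.length_append]; omega
        rw [h0, List.drop_zero] at this
        simp only [List.nil_append] at this
        rw [← this]
      refine ⟨w.take k, w.drop k, (List.take_append_drop k w).symm,
        List.length_pos_iff.mp (by rw [List.length_take]; omega),
        List.length_pos_iff.mp (by rw [List.length_drop]; omega), ⟨p, htk.symm⟩,
        ⟨q, hdk.symm⟩⟩

lemma pair_suffix_append_right {A B : List α} {a b : α} (hB : 2 ≤ B.length)
    (h : [a, b] <:+ A ++ B) : [a, b] <:+ B :=
  List.suffix_of_suffix_length_le h (List.suffix_append A B) (by simpa using hB)

lemma prefix_head?_eq {u t : List α} (h : u <+: t) (hu : u ≠ []) : t.head? = u.head? := by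
  obtain ⟨r, hr⟩ := h
  rcases u with _ | ⟨x, u'⟩
  · exact absurd rfl hu
  · rw [← hr]; rfl

lemma map_eq_of_infix {f : α → α} {m l : List α} (h : m <:+: l.map f) :
    ∃ m', m' <:+: l ∧ m = m'.map f := by
  obtain ⟨p, q, e⟩ := h
  rw [List.append_eq_map_iff] at e
  obtain ⟨l₁, l₂, hl, hp, hq⟩ := e
  rw [List.map_eq_append_iff] at hp
  obtain ⟨m₁, m₂, hl₁, hm₁, hm₂⟩ := hp
  exact ⟨m₂, ⟨m₁, l₂, by rw [hl, hl₁, List.append_assoc]⟩, hm₂.symm⟩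

lemma map_eq_of_suffix {f : α → α} {m l : List α} (h : m <:+ l.map f) :
    ∃ m', m' <:+ l ∧ m = m'.map f := by
  obtain ⟨p, e⟩ := h
  rw [List.append_eq_map_iff] at e
  obtain ⟨l₁, l₂, hl, hp, hm⟩ := e
  exact ⟨l₂, ⟨l₁, by rw [hl]⟩, hm.symm⟩

lemma chain'_imp_mem {R S : α → α → Prop} : ∀ {l : List α}, l.Chain' R →
    (∀ a ∈ l, ∀ b ∈ l, R a b → S a b) → l.Chain' S := by
  intro l
  induction l with
  | nil => intro _ _; simp
  | cons a l ih =>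
    intro h H
    rw [List.chain'_cons'] at h ⊢
    refine ⟨fun y hy => H a (by simp) y (by simp [List.mem_of_mem_head? hy]) (h.1 y hy),
      ih h.2 fun x hx y hy => H x (by simp [hx]) y (by simp [hy])⟩

end helpers

/-! ### specialized helpers -/

lemma takeWhile_spec (u v : List ℕ) (hu : ∀ x ∈ u, x ≠ 0) (hv : v = [] ∨ v.head? = some 0) :
    (u ++ v).takeWhile (· != 0) = u ∧ (u ++ v).dropWhile (· != 0) = v := by
  induction u with
  | nil =>
    rcases hv with rfl | hv
    · simp
    · rcases v with _ | ⟨x, v'⟩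
      · simp
      · simp only [List.head?_cons, Option.some_inj] at hv
        subst hv
        simp [List.takeWhile_cons, List.dropWhile_cons]
  | cons x u ih =>
    have hx : x ≠ 0 := hu x (by simp)
    have := ih (fun y hy => hu y (by simp [hy]))
    simp [List.takeWhile_cons, List.dropWhile_cons, hx, this.1, this.2]

lemma sum_map_succ (l : List ℕ) : (l.map (· + 1)).sum = l.sum + l.length := by
  induction l with
  | nil => simp
  | cons x l ih => simp [ih]; omega

lemma sum_map_pred (l : List ℕ) (h : ∀ x ∈ l, x ≠ 0) :
    (l.map (· - 1)).sum + l.length = l.sum := by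
  induction l with
  | nil => simp
  | cons x l ih =>
    have hx : x ≠ 0 := h x (by simp)
    have := ih (fun y hy => h y (by simp [hy]))
    simp only [List.map_cons, List.sum_cons, List.length_cons]
    omega

lemma map_succ_pred (l : List ℕ) : (l.map (· + 1)).map (· - 1) = l := by
  induction l with
  | nil => simp
  | cons x l ih => simp only [List.map_cons, ih]; congr 1

lemma map_pred_succ : ∀ (l : List ℕ), (∀ x ∈ l, x ≠ 0) → (l.map (· - 1)).map (· + 1) = l := by
  intro l
  induction l with
  | nil => intro _; simp
  | cons x l ih =>
    intro h
    have hx : x ≠ 0 := h x (by simp)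
    simp only [List.map_cons]
    rw [ih (fun y hy => h y (by simp [hy]))]
    congr 1
    omega

lemma avoidGG_of_infix {w l : List ℕ} (h : AvoidGG w) (hl : l <:+: w) : AvoidGG l :=
  fun a b c hi => h a b c (hi.trans hl)

lemma avoidGG_map_succ {l : List ℕ} (h : AvoidGG l) : AvoidGG (l.map (· + 1)) := by
  intro a b c hi hc
  obtain ⟨m, hm, he⟩ := map_eq_of_infix hi
  rcases m with _ | ⟨a', _ | ⟨b', _ | ⟨c', _ | _⟩⟩⟩ <;> simp at he
  obtain ⟨rfl, rfl, rfl⟩ := he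
  exact h a' b' c' hm ⟨by omega, by omega⟩

lemma avoidGG_map_pred {l : List ℕ} (h0 : ∀ x ∈ l, x ≠ 0) (h : AvoidGG l) :
    AvoidGG (l.map (· - 1)) := by
  intro a b c hi hc
  obtain ⟨m, hm, he⟩ := map_eq_of_infix hi
  rcases m with _ | ⟨a', _ | ⟨b', _ | ⟨c', _ | _⟩⟩⟩ <;> simp at he
  obtain ⟨rfl, rfl, rfl⟩ := he
  have ha' : a' ≠ 0 := h0 a' (hm.sublist.subset (by simp))
  have hb' : b' ≠ 0 := h0 b' (hm.sublist.subset (by simp))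
  have hc' : c' ≠ 0 := h0 c' (hm.sublist.subset (by simp))
  exact h a' b' c' hm ⟨by omega, by omega⟩

lemma endAsc_map_succ {l : List ℕ} (h : ∀ a b : ℕ, [a, b] <:+ l → a < b) :
    ∀ a b : ℕ, [a, b] <:+ l.map (· + 1) → a < b := by
  intro a b hs
  obtain ⟨m, hm, he⟩ := map_eq_of_suffix hs
  rcases m with _ | ⟨a', _ | ⟨b', _ | _⟩⟩ <;> simp at he
  obtain ⟨rfl, rfl⟩ := he
  have := h a' b' hm
  omega

lemma endAsc_map_pred {l : List ℕ} (h0 : ∀ x ∈ l, x ≠ 0)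
    (h : ∀ a b : ℕ, [a, b] <:+ l → a < b) :
    ∀ a b : ℕ, [a, b] <:+ l.map (· - 1) → a < b := by
  intro a b hs
  obtain ⟨m, hm, he⟩ := map_eq_of_suffix hs
  rcases m with _ | ⟨a', _ | ⟨b', _ | _⟩⟩ <;> simp at he
  obtain ⟨rfl, rfl⟩ := he
  have := h a' b' hm
  have ha' : a' ≠ 0 := h0 a' (hm.sublist.subset (by simp))
  omega

lemma takeWhile_facts (t : List ℕ) :
    t = t.takeWhile (· != 0) ++ t.dropWhile (· != 0) ∧
    (∀ x ∈ t.takeWhile (· != 0), x ≠ 0) ∧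
    (t.dropWhile (· != 0) = [] ∨ (t.dropWhile (· != 0)).head? = some 0) := by
  refine ⟨(List.takeWhile_append_dropWhile).symm,
    fun x hx => by simpa using List.mem_takeWhile_imp hx, ?_⟩
  rcases eq_or_ne (t.dropWhile (· != 0)) [] with h | h
  · exact Or.inl h
  · right
    have := List.head_dropWhile_not (· != 0) h
    rw [List.head?_eq_head h]
    simpa using this

lemma goodB_decomp {t u v : List ℕ} (hB : GoodB (0 :: t)) (hUV : t = u ++ v)
    (hu0 : ∀ x ∈ u, x ≠ 0) (hv0 : v = [] ∨ v.head? = some 0) :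
    GoodB (u.map (· - 1)) ∧ GoodB v ∧ (u ≠ [] → u.head? = some 1) ∧
    (v ≠ [] → v.tail.head? = some 1) := by
  obtain ⟨⟨hh, hch⟩, hGG, hasc⟩ := hB
  have hchT : t.Chain' (fun a b => b ≤ a + 1) := (List.chain'_cons'.mp hch).2
  have hhead1 : ∀ h ∈ t.head?, h ≤ 0 + 1 := (List.chain'_cons'.mp hch).1
  have hpreU : u <+: t := ⟨v, hUV.symm⟩
  have hsufV : v <:+ t := ⟨u, hUV.symm⟩
  have hsuffT : t <:+ 0 :: t := List.suffix_cons 0 t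
  have hGGt : AvoidGG t := avoidGG_of_infix hGG hsuffT.isInfix
  have hascT : ∀ a b : ℕ, [a, b] <:+ t → a < b := fun a b hs => hasc a b (hs.trans hsuffT)
  have hchU : u.Chain' (fun a b => b ≤ a + 1) := hchT.prefix hpreU
  have hchV : v.Chain' (fun a b => b ≤ a + 1) := hchT.suffix hsufV
  have hu1 : u ≠ [] → u.head? = some 1 := by
    intro hne
    have hhd : t.head? = u.head? := prefix_head?_eq hpreU hne
    rcases u with _ | ⟨x, u'⟩
    · exact absurd rfl hne
    · have hx0 : x ≠ 0 := hu0 x (by simp)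
      have hx1 : x ≤ 1 := by simpa using hhead1 x (by rw [hhd]; rfl)
      simp only [List.head?_cons, Option.some_inj]
      omega
  have hascU : ∀ a b : ℕ, [a, b] <:+ u → a < b := by
    intro a b hs
    rcases hv0 with rfl | hv0'
    · exact hascT a b (by rw [hUV, List.append_nil]; exact hs)
    · obtain ⟨r, hr⟩ := hs
      rcases v with _ | ⟨v0, v'⟩
      · simp at hv0'
      · have hv00 : v0 = 0 := by simpa using hv0'
        subst hv00
        have hinf : [a, b, 0] <:+: t := ⟨r, v', by rw [hUV, ← hr]; simp⟩
        have := hGGt a b 0 hinf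
        omega
  have hGBv : GoodB v := by
    refine ⟨⟨?_, hchV⟩, avoidGG_of_infix hGGt hsufV.isInfix,
      fun a b hs => hascT a b (hs.trans hsufV)⟩
    intro a ha
    rcases hv0 with rfl | h0
    · simp at ha
    · rw [h0] at ha
      exact (Option.some_inj.mp ha).symm
  have hGBu : GoodB (u.map (· - 1)) := by
    refine ⟨⟨?_, ?_⟩, avoidGG_map_pred hu0 (avoidGG_of_infix hGGt hpreU.isInfix),
      endAsc_map_pred hu0 hascU⟩
    · intro a ha
      rcases eq_or_ne u [] with rfl | hne
      · simp at ha
      · rw [List.head?_map, hu1 hne] at ha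
        simpa using ha.symm
    · exact (List.chain'_map _).mpr (hchU.imp fun a b h => by omega)
  refine ⟨hGBu, hGBv, hu1, ?_⟩
  intro hne
  rcases v with _ | ⟨v0, v'⟩
  · exact absurd rfl hne
  have hv00 : v0 = 0 := by
    rcases hv0 with h | h
    · simp at h
    · simpa using h
  subst hv00
  rcases v' with _ | ⟨z, v''⟩
  · exfalso
    rcases eq_or_ne u [] with rfl | hne'
    · have : (0:ℕ) < 0 := hasc 0 0 (by rw [hUV]; simp)
      omega
    · obtain ⟨r, k, hrk⟩ : ∃ r k, u = r ++ [k] :=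
        ⟨u.dropLast, u.getLast hne', (List.dropLast_append_getLast hne').symm⟩
      have : k < 0 := hasc k 0 ⟨0 :: r, by rw [hUV, hrk]; simp⟩
      omega
  · have hz1 : z ≤ 0 + 1 := (List.chain'_cons.mp hchV).1
    have hz0 : z ≠ 0 := by
      rcases eq_or_ne u [] with rfl | hne'
      · have := hGG 0 0 z ⟨[], v'', by rw [hUV]; simp⟩
        omega
      · obtain ⟨r, k, hrk⟩ : ∃ r k, u = r ++ [k] :=
          ⟨u.dropLast, u.getLast hne', (List.dropLast_append_getLast hne').symm⟩
        have := hGGt k 0 z ⟨r, v'', by rw [hUV, hrk]; simp⟩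
        omega
    simp only [List.tail_cons, List.head?_cons, Option.some_inj]
    omega

lemma goodN_decompA {t : List ℕ} (h : GoodN (0 :: t)) (hlast : (0 :: t).getLast? = some 0) :
    (0 :: t) = (0 :: t).dropLast ++ [0] ∧ GoodN (0 :: t).dropLast ∧
    ((0 :: t).dropLast ≠ [] → (0 :: t).dropLast.head? = some 0 ∧
      (0 :: t).dropLast.getLast? ≠ some 0 ∧ 2 ≤ (0 :: t).dropLast.length) := by
  obtain ⟨⟨hh, hch⟩, hne⟩ := h
  have hnil : (0 :: t) ≠ [] := List.cons_ne_nil _ _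
  have hgl : (0 :: t).getLast hnil = 0 := by
    have := List.getLast?_eq_getLast hnil
    rw [hlast] at this
    exact (Option.some_inj.mp this).symm
  have hx : (0 :: t) = (0 :: t).dropLast ++ [0] := by
    conv_lhs => rw [← List.dropLast_append_getLast hnil, hgl]
  set y := (0 :: t).dropLast with hy
  have hpre : y <+: (0 :: t) := List.dropLast_prefix _
  have hlasty : ∀ p ∈ y.getLast?, p ≠ 0 := by
    rw [hx] at hne
    have := (List.chain'_append.mp hne).2.2
    intro p hp
    exact this p hp 0 rfl
  have hGN : GoodN y := by
    refine ⟨⟨?_, hch.prefix hpre⟩, hne.prefix hpre⟩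
    intro a ha
    rcases eq_or_ne y [] with hnil' | hne'
    · rw [hnil'] at ha; simp at ha
    · rw [← prefix_head?_eq hpre hne'] at ha
      exact (by simpa using ha : (0:ℕ) = a).symm
  refine ⟨hx, hGN, fun hne' => ⟨?_, ?_, ?_⟩⟩
  · rw [← prefix_head?_eq hpre hne']; rfl
  · intro hc
    exact hlasty 0 (Option.mem_def.mpr hc) rfl
  · rcases y with _ | ⟨c, _ | ⟨d, y'⟩⟩
    · exact absurd rfl hne'
    · exfalso
      have hc0 : c = 0 := by
        have := prefix_head?_eq hpre (by simp)
        simp at this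
        exact this.symm
      exact hlasty c rfl hc0
    · simp [List.length_cons]

lemma goodN_decompB {t u v : List ℕ} (h : GoodN (0 :: t)) (hlast : (0 :: t).getLast? ≠ some 0)
    (hUV : t = u ++ v) (hu0 : ∀ x ∈ u, x ≠ 0) (hv0 : v = [] ∨ v.head? = some 0) :
    u ≠ [] ∧ u.head? = some 1 ∧ GoodN (u.map (· - 1)) ∧ GoodN v ∧
    (v ≠ [] → v.getLast? ≠ some 0 ∧ 2 ≤ v.length) := by
  obtain ⟨⟨hh, hch⟩, hne⟩ := h
  have htne : t ≠ [] := by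
    intro hc; subst hc; simp at hlast
  have hchT : t.Chain' (fun a b => b ≤ a + 1) := (List.chain'_cons'.mp hch).2
  have hneT : t.Chain' (· ≠ ·) := (List.chain'_cons'.mp hne).2
  have hhd1 : t.head? = some 1 := by
    rcases t with _ | ⟨x, t'⟩
    · exact absurd rfl htne
    · have hx1 : x ≤ 0 + 1 := by simpa using (List.chain'_cons'.mp hch).1 x rfl
      have hx0 : (0:ℕ) ≠ x := by simpa using (List.chain'_cons'.mp hne).1 x rfl
      simp only [List.head?_cons, Option.some_inj]
      omega
  have hpreU : u <+: t := ⟨v, hUV.symm⟩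
  have hsufV : v <:+ t := ⟨u, hUV.symm⟩
  have hune : u ≠ [] := by
    intro hc
    subst hc
    simp only [List.nil_append] at hUV
    subst hUV
    rcases hv0 with rfl | h0
    · exact htne rfl
    · rw [hhd1] at h0; simp at h0
  have hu1 : u.head? = some 1 := by rw [← prefix_head?_eq hpreU hune, hhd1]
  have hglT : (0 :: t).getLast? = t.getLast? := by
    rcases t with _ | ⟨c, t'⟩
    · exact absurd rfl htne
    · exact List.getLast?_cons_cons
  refine ⟨hune, hu1, ⟨⟨?_, ?_⟩, ?_⟩, ⟨⟨?_, hchT.suffix hsufV⟩, hneT.suffix hsufV⟩, ?_⟩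
  · intro a ha
    rw [List.head?_map, hu1] at ha
    simpa using ha.symm
  · exact (List.chain'_map _).mpr ((hchT.prefix hpreU).imp fun a b hab => by omega)
  · refine (List.chain'_map _).mpr (chain'_imp_mem (hneT.prefix hpreU) ?_)
    intro a ha b hb hab
    have ha0 := hu0 a ha
    have hb0 := hu0 b hb
    omega
  · intro a ha
    rcases hv0 with rfl | h0
    · simp at ha
    · rw [h0] at ha
      exact (Option.some_inj.mp ha).symm
  · intro hvne
    have hglV : t.getLast? = v.getLast? := by
      rw [hUV, List.getLast?_append]
      rw [List.getLast?_eq_getLast hvne]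
      rfl
    constructor
    · rw [← hglV, ← hglT]; exact hlast
    · rcases v with _ | ⟨v0, _ | ⟨z, v''⟩⟩
      · exact absurd rfl hvne
      · exfalso
        have hv00 : v0 = 0 := by
          rcases hv0 with hc | hc
          · simp at hc
          · simpa using hc
        apply hlast
        rw [hglT, hglV, hv00]
        rfl
      · simp [List.length_cons]

lemma psi_spec : ∀ n : ℕ, ∀ w : List ℕ, w.length = n → GoodB w →
    GoodN (psi w) ∧ (psi w).length = w.length ∧ (psi w).sum = w.sum ∧
    (w.tail.head? = some 1 → (psi w).getLast? ≠ some 0) := by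
  intro n
  induction n using Nat.strong_induction_on with
  | _ n ih =>
  intro w hlen hB
  rcases w with _ | ⟨a, t⟩
  · rw [psi_nil]
    exact ⟨⟨⟨by simp, by simp⟩, by simp⟩, rfl, rfl, by simp⟩
  have ha : a = 0 := hB.1.1 a rfl
  subst ha
  obtain ⟨hUV, hu0, hv0⟩ := takeWhile_facts t
  set u := t.takeWhile (· != 0) with hu
  set v := t.dropWhile (· != 0) with hv
  obtain ⟨hGBu, hGBv, hu1, hv1⟩ := goodB_decomp hB hUV hu0 hv0
  have hlt : t.length < n := by simp at hlen; omega
  rcases eq_or_ne u [] with hune | hune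
  · -- first block empty
    have hvt : v = t := by rw [hUV, hune, List.nil_append]
    have hGBt : GoodB t := hvt ▸ hGBv
    obtain ⟨hGN, hlen', hsum', hinv⟩ := ih t.length hlt t rfl hGBt
    rw [psi_cons_empty 0 t (hu ▸ hune)]
    rcases eq_or_ne t [] with rfl | htne
    · rw [psi_nil]
      exact ⟨⟨⟨by simp, by simp⟩, by simp⟩, by simp, by simp, by simp⟩
    have hpsine : psi t ≠ [] := by
      intro hc
      have := congrArg List.length hc
      rw [hlen'] at this
      exact htne (List.length_eq_zero_iff.mp this)
    have hlast : (psi t).getLast? ≠ some 0 := by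
      apply hinv
      have : t.tail.head? = some 1 := by
        have := hv1 (hvt.symm ▸ htne)
        rwa [hvt] at this
      exact this
    have hhead : (psi t).head? = some 0 := by
      rcases hpt : psi t with _ | ⟨c, l⟩
      · exact absurd hpt hpsine
      · have := hGN.1.1 c (by rw [hpt]; rfl)
        rw [this]
        rfl
    refine ⟨⟨⟨?_, ?_⟩, ?_⟩, ?_, ?_, ?_⟩
    · intro b hb
      rw [List.head?_append, hhead] at hb
      simpa using hb.symm
    · rw [List.chain'_append]
      refine ⟨hGN.1.2, by simp, ?_⟩
      intro p hp q hq
      simp at hq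
      omega
    · rw [List.chain'_append]
      refine ⟨hGN.2, by simp, ?_⟩
      intro p hp q hq
      simp at hq
      subst hq
      intro hc
      exact hlast (by rw [Option.mem_def.mp hp, hc])
    · simp [hlen']
    · simp [hsum']
    · intro hc
      exfalso
      have hth : t.head? = some 0 := by
        rcases hv0 with h | h
        · exact absurd (hvt ▸ h) htne
        · exact hvt ▸ h
      simp only [List.tail_cons] at hc
      rw [hth] at hc
      simp at hc
  · -- first block nonempty
    have huvlen : u.length + v.length = t.length := by
      rw [hUV, List.length_append]
    have hulen : 0 < u.length := List.length_pos_iff.mpr hune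
    obtain ⟨hGNu, hlenu, hsumu, hinvu⟩ :=
      ih (u.map (· - 1)).length (by simp; omega) (u.map (· - 1)) rfl hGBu
    obtain ⟨hGNv, hlenv, hsumv, hinvv⟩ := ih v.length (by omega) v rfl hGBv
    rw [psi_cons 0 t (hu ▸ hune)]
    rw [← hu, ← hv]
    set pu := psi (u.map (· - 1)) with hpu
    set pv := psi v with hpv
    set A := pu.map (· + 1) with hA
    have hpune : pu ≠ [] := by
      intro hc
      have := congrArg List.length hc
      rw [hlenu] at this
      simp at this
      exact hune this
    have hAne : A ≠ [] := by simp [hA, hpune]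
    have hheadpu : pu.head? = some 0 := by
      rcases hpt : pu with _ | ⟨c, l⟩
      · exact absurd hpt hpune
      · have := hGNu.1.1 c (by rw [hpt]; rfl)
        rw [this]
        rfl
    have hheadA : A.head? = some 1 := by
      rw [hA, List.head?_map, hheadpu]; rfl
    have hheadpv : pv ≠ [] → pv.head? = some 0 := by
      intro hne
      rcases hpt : pv with _ | ⟨c, l⟩
      · exact absurd hpt hne
      · have := hGNv.1.1 c (by rw [hpt]; rfl)
        rw [this]
        rfl
    have hlastA : ∃ q, A.getLast? = some (q + 1) := by
      obtain ⟨k, hk⟩ := Option.ne_none_iff_exists'.mp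
        (by simpa using hpune : pu.getLast? ≠ none)
      exact ⟨k, by rw [hA, List.getLast?_map, hk]; rfl⟩
    have hchA : A.Chain' (fun a b => b ≤ a + 1) :=
      (List.chain'_map _).mpr (hGNu.1.2.imp fun a b hab => by omega)
    have hneA : A.Chain' (· ≠ ·) :=
      (List.chain'_map _).mpr (hGNu.2.imp fun a b hab => by omega)
    have hvpvnil : v = [] → pv = [] := by
      intro hc
      rw [hpv, hc, psi_nil]
    refine ⟨⟨⟨by simp, ?_⟩, ?_⟩, ?_, ?_, ?_⟩
    · rw [List.chain'_cons']
      constructor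
      · intro b hb
        rw [List.head?_append, hheadA] at hb
        simp at hb
        omega
      · rw [List.chain'_append]
        refine ⟨hchA, hGNv.1.2, ?_⟩
        intro p hp q hq
        have : q = 0 := by
          have hne : pv ≠ [] := by
            intro hc; rw [hc] at hq; simp at hq
          rw [hheadpv hne] at hq
          simpa using (Option.mem_def.mp hq).symm
        omega
    · rw [List.chain'_cons']
      constructor
      · intro b hb
        rw [List.head?_append, hheadA] at hb
        simp at hb
        omega
      · rw [List.chain'_append]
        refine ⟨hneA, hGNv.2, ?_⟩
        intro p hp q hq
        have hq0 : q = 0 := by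
          have hne : pv ≠ [] := by
            intro hc; rw [hc] at hq; simp at hq
          rw [hheadpv hne] at hq
          simpa using (Option.mem_def.mp hq).symm
        obtain ⟨r, hr⟩ := hlastA
        rw [Option.mem_def.mp hp] at hr
        simp only [Option.some_inj] at hr
        omega
    · simp only [List.length_cons, List.length_append, hA, List.length_map, hlenu, hlenv]
      simp [hUV]
    · simp only [List.sum_cons, List.sum_append, hA, sum_map_succ]
      rw [hsumu, hsumv, hUV, List.sum_append, hlenu, List.length_map]
      have h1 := sum_map_pred u hu0
      omega
    · intro _
      rcases eq_or_ne v [] with hvnil | hvne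
      · have hpvnil : pv = [] := hvpvnil hvnil
        rw [hpvnil, List.append_nil]
        obtain ⟨r, hr⟩ := hlastA
        rw [show (0 : ℕ) :: A = [0] ++ A from rfl, List.getLast?_append, hr]
        simp
      · have hpvne : pv ≠ [] := by
          intro hc
          have := congrArg List.length hc
          rw [hlenv] at this
          exact hvne (List.length_eq_zero_iff.mp this)
        have hlastpv : pv.getLast? ≠ some 0 := hinvv (hv1 hvne)
        rw [show (0 : ℕ) :: (A ++ pv) = ([0] ++ A) ++ pv from by simp,
          List.getLast?_append, List.getLast?_append]
        obtain ⟨k, hk⟩ := Option.ne_none_iff_exists'.mp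
          (by simpa using hpvne : pv.getLast? ≠ none)
        rw [hk]
        simp only [Option.some_or]
        intro hc
        exact hlastpv (by rw [hk, hc])

lemma getLast?_of_singleton_suffix {a : ℕ} {A : List ℕ} (h : [a] <:+ A) :
    A.getLast? = some a := by
  obtain ⟨r, hr⟩ := h
  rw [← hr]
  exact List.getLast?_concat

lemma head?_of_prefix {b : ℕ} {l L : List ℕ} (h : (b :: l) <+: L) : L.head? = some b := by
  obtain ⟨r, hr⟩ := h
  rw [← hr]
  rfl

lemma avoidGG_append {A B : List ℕ} (hA : AvoidGG A) (hB : AvoidGG B)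
    (h2 : ∀ a b c : ℕ, [a, b] <:+ A → B.head? = some c → ¬(b ≤ a ∧ c ≤ b))
    (h1 : ∀ a b c : ℕ, A.getLast? = some a → [b, c] <+: B → ¬(b ≤ a ∧ c ≤ b)) :
    AvoidGG (A ++ B) := by
  intro a b c h hc
  rcases infix_append_split h with h | h | ⟨s, t, hst, hsne, htne, hs, ht⟩
  · exact hA a b c h hc
  · exact hB a b c h hc
  · rcases s with _ | ⟨x, _ | ⟨y, _ | ⟨z, s'⟩⟩⟩
    · exact absurd rfl hsne
    · -- s = [x] : t = [b, c] with x = a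
      simp only [List.cons_append, List.nil_append, List.cons.injEq] at hst
      obtain ⟨hax, hbc⟩ := hst
      rw [← hbc] at ht
      rw [hax] at hc
      exact h1 x b c (getLast?_of_singleton_suffix hs) ht hc
    · -- s = [x, y] = [a, b], t = [c]
      simp only [List.cons_append, List.nil_append, List.cons.injEq] at hst
      obtain ⟨hax, hby, hct⟩ := hst
      rw [← hct] at ht
      rw [hax, hby] at hc
      exact h2 x y c hs (head?_of_prefix ht) hc
    · -- s too long
      exfalso
      have hlen3 := congrArg List.length hst
      simp only [List.length_cons, List.length_append, List.length_nil] at hlen3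
      have ht' : 0 < t.length := List.length_pos_iff.mpr htne
      omega

lemma goodB_nil : GoodB [] := by
  refine ⟨⟨by simp, by simp⟩, ?_, ?_⟩
  · intro a b c h hc
    have := h.sublist.length_le
    simp at this
  · intro a b h
    have := h.sublist.length_le
    simp at this

lemma goodB_zero : GoodB [0] := by
  refine ⟨⟨by simp, by simp⟩, ?_, ?_⟩
  · intro a b c h hc
    have := h.sublist.length_le
    simp at this
  · intro a b h
    have := h.sublist.length_le
    simp at this

lemma phi_spec : ∀ n : ℕ, ∀ x : List ℕ, x.length = n → GoodN x →
    GoodB (phi x) ∧ (phi x).length = x.length ∧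
    (x.getLast? ≠ some 0 → x ≠ [] → (phi x).tail.head? = some 1) := by
  intro n
  induction n using Nat.strong_induction_on with
  | _ n ih =>
  intro x hlen hN
  rcases x with _ | ⟨a, t⟩
  · rw [phi_nil]
    exact ⟨goodB_nil, rfl, fun _ hc => absurd rfl hc⟩
  have ha : a = 0 := hN.1.1 a rfl
  subst ha
  rcases eq_or_ne ((0 :: t).getLast?) (some 0) with hlast | hlast
  · -- ends with 0
    rw [phi_last0 0 t hlast]
    obtain ⟨hxeq, hGNy, hyfacts⟩ := goodN_decompA hN hlast
    set y := (0 :: t).dropLast with hy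
    have hylen : y.length = t.length := by
      rw [hy, List.length_dropLast, List.length_cons]
      simp
    obtain ⟨hGBy, hlen', hinv'⟩ :=
      ih y.length (by simp at hlen; omega) y rfl hGNy
    rcases eq_or_ne y [] with hynil | hyne
    · rw [hynil, phi_nil]
      have ht0 : t = [] := by
        rw [hynil] at hylen
        exact (List.length_eq_zero_iff.mp hylen.symm)
      subst ht0
      exact ⟨goodB_zero, rfl, fun hc _ => absurd hlast hc⟩
    · obtain ⟨hheady, hlasty, hylen2⟩ := hyfacts hyne
      have hphiylen : (phi y).length = y.length := hlen'
      have hphiyne : phi y ≠ [] := by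
        intro hc
        have := congrArg List.length hc
        rw [hphiylen] at this
        exact hyne (List.length_eq_zero_iff.mp this)
      have htl : (phi y).tail.head? = some 1 := hinv' hlasty hyne
      have hhd : (phi y).head? = some 0 := by
        rcases hpt : phi y with _ | ⟨c, l⟩
        · exact absurd hpt hphiyne
        · have := hGBy.1.1 c (by rw [hpt]; rfl)
          rw [this]
          rfl
      obtain ⟨r, hr⟩ : ∃ r, phi y = 0 :: 1 :: r := by
        rcases hpt : phi y with _ | ⟨c, _ | ⟨d, r⟩⟩
        · exact absurd hpt hphiyne
        · exfalso
          rw [hpt] at hphiylen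
          simp at hphiylen
          omega
        · rw [hpt] at hhd htl
          simp at hhd htl
          exact ⟨r, by rw [hhd, htl]⟩
      refine ⟨⟨⟨by simp, ?_⟩, ?_, ?_⟩, ?_, fun hc _ => absurd hlast hc⟩
      · rw [List.chain'_cons']
        exact ⟨fun b hb => by rw [hhd] at hb; simp at hb; omega, hGBy.1.2⟩
      · intro p q c h hc
        rw [List.infix_cons_iff] at h
        rcases h with h | h
        · rw [hr] at h
          simp only [List.cons_prefix_cons] at h
          obtain ⟨rfl, h⟩ := h
          obtain ⟨rfl, h⟩ := h
          obtain ⟨rfl, -⟩ := h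
          omega
        · exact hGBy.2.1 p q c h hc
      · intro p q h
        rw [List.suffix_cons_iff] at h
        rcases h with h | h
        · exfalso
          have := congrArg List.length h
          rw [hr] at this
          simp at this
        · exact hGBy.2.2 p q h
      · simp [hphiylen, hylen]
  · -- does not end with 0
    obtain ⟨hUV, hu0, hv0⟩ := takeWhile_facts t
    set u := t.takeWhile (· != 0) with hu
    set v := t.dropWhile (· != 0) with hv
    obtain ⟨hune, hu1, hGNu, hGNv, hvfacts⟩ := goodN_decompB hN hlast hUV hu0 hv0
    have huvlen : u.length + v.length = t.length := by
      rw [hUV, List.length_append]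
    have hulen : 0 < u.length := List.length_pos_iff.mpr hune
    have hlen' : t.length + 1 = n := by simpa using hlen
    obtain ⟨hGBu, hlenu, _⟩ :=
      ih (u.map (· - 1)).length (by simp; omega) (u.map (· - 1)) rfl hGNu
    obtain ⟨hGBv, hlenv, hinvv⟩ := ih v.length (by omega) v rfl hGNv
    rw [phi_cons 0 t hlast, ← hu, ← hv]
    set pu := phi (u.map (· - 1)) with hpu
    set pv := phi v with hpv
    set A := pu.map (· + 1) with hA
    have hpune : pu ≠ [] := by
      intro hc
      have := congrArg List.length hc
      rw [hlenu] at this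
      simp at this
      exact hune this
    have hAne : A ≠ [] := by simp [hA, hpune]
    have hheadpu : pu.head? = some 0 := by
      rcases hpt : pu with _ | ⟨c, l⟩
      · exact absurd hpt hpune
      · have := hGBu.1.1 c (by rw [hpt]; rfl)
        rw [this]
        rfl
    have hheadA : A.head? = some 1 := by
      rw [hA, List.head?_map, hheadpu]; rfl
    have hlastA : ∃ q, A.getLast? = some (q + 1) := by
      obtain ⟨k, hk⟩ := Option.ne_none_iff_exists'.mp
        (by simpa using hpune : pu.getLast? ≠ none)
      exact ⟨k, by rw [hA, List.getLast?_map, hk]; rfl⟩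
    have hpv01 : v ≠ [] → ∃ r, pv = 0 :: 1 :: r := by
      intro hvne
      obtain ⟨hlastv, hvlen2⟩ := hvfacts hvne
      have hpvlen : pv.length = v.length := hlenv
      have hpvne : pv ≠ [] := by
        intro hc
        have := congrArg List.length hc
        rw [hpvlen] at this
        exact hvne (List.length_eq_zero_iff.mp this)
      have htl : pv.tail.head? = some 1 := hinvv hlastv hvne
      have hhd : pv.head? = some 0 := by
        rcases hpt : pv with _ | ⟨c, l⟩
        · exact absurd hpt hpvne
        · have := hGBv.1.1 c (by rw [hpt]; rfl)
          rw [this]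
          rfl
      rcases hpt : pv with _ | ⟨c, _ | ⟨d, r⟩⟩
      · exact absurd hpt hpvne
      · exfalso
        rw [hpt] at hpvlen
        simp at hpvlen
        omega
      · rw [hpt] at hhd htl
        simp at hhd htl
        exact ⟨r, by rw [hhd, htl]⟩
    have hheadpv : ∀ c, pv.head? = some c → c = 0 := by
      intro c hc
      have hpvne : pv ≠ [] := by
        intro h0; rw [h0] at hc; simp at hc
      rcases hpt : pv with _ | ⟨e, l⟩
      · exact absurd hpt hpvne
      · have he := hGBv.1.1 e (by rw [hpt]; rfl)
        rw [hpt] at hc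
        simp at hc
        omega
    have hGGA : AvoidGG A := avoidGG_map_succ hGBu.2.1
    have hascA : ∀ a b : ℕ, [a, b] <:+ A → a < b := endAsc_map_succ hGBu.2.2
    have hGGApv : AvoidGG (A ++ pv) := by
      apply avoidGG_append hGGA hGBv.2.1
      · intro a b c hs hh hc
        have hc0 : c = 0 := hheadpv c hh
        have := hascA a b hs
        omega
      · intro a b c hla hp hc
        obtain ⟨q, hq⟩ := hlastA
        rw [hq] at hla
        simp only [Option.some_inj] at hla
        have hvne : v ≠ [] := by
          intro h0
          rw [hpv, h0, phi_nil] at hp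
          have := hp.sublist.length_le
          simp at this
        obtain ⟨r, hr⟩ := hpv01 hvne
        rw [hr] at hp
        simp only [List.cons_prefix_cons] at hp
        obtain ⟨rfl, hp⟩ := hp
        obtain ⟨rfl, _⟩ := hp
        omega
    refine ⟨⟨⟨by simp, ?_⟩, ?_, ?_⟩, ?_, ?_⟩
    · rw [List.chain'_cons']
      constructor
      · intro b hb
        rw [List.head?_append, hheadA] at hb
        simp at hb
        omega
      · rw [List.chain'_append]
        refine ⟨(List.chain'_map _).mpr (hGBu.1.2.imp fun a b hab => by omega),
          hGBv.1.2, ?_⟩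
        intro p hp q hq
        have : q = 0 := hheadpv q (Option.mem_def.mp hq)
        omega
    · intro p q c h hc
      rw [List.infix_cons_iff] at h
      rcases h with h | h
      · have hp0 : p = 0 := by
          have h1 := head?_of_prefix h
          simp at h1
          omega
        have hq1 : q = 1 := by
          obtain ⟨r, hr⟩ := h
          rcases hA' : A with _ | ⟨a1, A'⟩
          · exact absurd hA' hAne
          · have ha1 : a1 = 1 := by rw [hA'] at hheadA; simpa using hheadA
            rw [hA'] at hr
            simp at hr
            obtain ⟨-, hq, -⟩ := hr
            omega
        omega
      · exact hGGApv p q c h hc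
    · intro p q h
      rw [List.suffix_cons_iff] at h
      rcases h with h | h
      · -- [p, q] = 0 :: (A ++ pv) : A = [q], pv = []
        have hlen2 := congrArg List.length h
        simp only [List.length_cons, List.length_append, List.length_nil] at hlen2
        have hApv1 : A.length + pv.length = 1 := by omega
        have hpvnil : pv = [] := by
          have : 0 < A.length := List.length_pos_iff.mpr hAne
          exact List.length_eq_zero_iff.mp (by omega)
        have hA1 : A = [q] := by
          rw [hpvnil, List.append_nil] at h
          rcases hA' : A with _ | ⟨a1, A'⟩
          · exact absurd hA' hAne
          · rw [hA'] at h
            simp at h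
            rw [h.2.1, h.2.2]
        have : q = 1 := by
          rw [hA1] at hheadA
          simpa using hheadA
        have : p = 0 := by
          simp at h
          exact h.1
        omega
      · rcases eq_or_ne v [] with hvnil | hvne
        · have hpvnil : pv = [] := by rw [hpv, hvnil, phi_nil]
          rw [hpvnil, List.append_nil] at h
          exact hascA p q h
        · obtain ⟨hlastv, hvlen2⟩ := hvfacts hvne
          have hpvlen2 : 2 ≤ pv.length := by rw [hlenv]; exact hvlen2
          exact hGBv.2.2 p q (pair_suffix_append_right hpvlen2 h)
    · simp only [List.length_cons, List.length_append, hA, List.length_map, hlenu, hlenv]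
      simp [hUV]
    · intro _ _
      rw [List.tail_cons, List.head?_append, hheadA]
      rfl

lemma phi_last0' (x : List ℕ) (hne : x ≠ []) (h : x.getLast? = some 0) :
    phi x = 0 :: phi x.dropLast := by
  rcases x with _ | ⟨a, t⟩
  · exact absurd rfl hne
  · exact phi_last0 a t h

lemma head?_goodB {w : List ℕ} (h : GoodB w) (hne : w ≠ []) : w.head? = some 0 := by
  rcases hw : w with _ | ⟨c, l⟩
  · exact absurd hw hne
  · rw [h.1.1 c (by rw [hw]; rfl)]
    rfl

lemma head?_goodN {w : List ℕ} (h : GoodN w) (hne : w ≠ []) : w.head? = some 0 := by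
  rcases hw : w with _ | ⟨c, l⟩
  · exact absurd hw hne
  · rw [h.1.1 c (by rw [hw]; rfl)]
    rfl

lemma psi_phi : ∀ n : ℕ, ∀ x : List ℕ, x.length = n → GoodN x → psi (phi x) = x := by
  intro n
  induction n using Nat.strong_induction_on with
  | _ n ih =>
  intro x hlen hN
  rcases x with _ | ⟨a, t⟩
  · rw [phi_nil, psi_nil]
  have ha : a = 0 := hN.1.1 a rfl
  subst ha
  rcases eq_or_ne ((0 :: t).getLast?) (some 0) with hlast | hlast
  · rw [phi_last0 0 t hlast]
    obtain ⟨hxeq, hGNy, hyfacts⟩ := goodN_decompA hN hlast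
    set y := (0 :: t).dropLast with hy
    have hylen : y.length = t.length := by
      rw [hy, List.length_dropLast]; simp
    rcases eq_or_ne y [] with hynil | hyne
    · rw [hynil, phi_nil]
      rw [hynil] at hxeq
      simp at hxeq
      rw [psi_cons_empty 0 [] (by simp), psi_nil, hxeq]
      rfl
    · obtain ⟨hGBy, hlen', hinv'⟩ := phi_spec y.length y rfl hGNy
      have hphiyne : phi y ≠ [] := by
        intro hc
        have := congrArg List.length hc
        rw [hlen'] at this
        exact hyne (List.length_eq_zero_iff.mp this)
      have hhd : (phi y).head? = some 0 := head?_goodB hGBy hphiyne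
      have htw : (phi y).takeWhile (· != 0) = [] ∧ (phi y).dropWhile (· != 0) = phi y := by
        have := takeWhile_spec [] (phi y) (by simp) (Or.inr hhd)
        simpa using this
      rw [psi_cons_empty 0 (phi y) htw.1]
      rw [ih y.length (by simp at hlen; omega) y rfl hGNy]
      exact hxeq.symm
  · obtain ⟨hUV, hu0, hv0⟩ := takeWhile_facts t
    set u := t.takeWhile (· != 0) with hu
    set v := t.dropWhile (· != 0) with hv
    obtain ⟨hune, hu1, hGNu, hGNv, hvfacts⟩ := goodN_decompB hN hlast hUV hu0 hv0
    have huvlen : u.length + v.length = t.length := by rw [hUV, List.length_append]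
    have hulen : 0 < u.length := List.length_pos_iff.mpr hune
    have hlen' : t.length + 1 = n := by simpa using hlen
    obtain ⟨hGBu, hlenu, _⟩ := phi_spec (u.map (· - 1)).length (u.map (· - 1)) rfl hGNu
    obtain ⟨hGBv, hlenv, _⟩ := phi_spec v.length v rfl hGNv
    rw [phi_cons 0 t hlast, ← hu, ← hv]
    set pu := phi (u.map (· - 1)) with hpu
    set pv := phi v with hpv
    set A := pu.map (· + 1) with hA
    have hpune : pu ≠ [] := by
      intro hc
      have := congrArg List.length hc
      rw [hlenu] at this
      simp at this
      exact hune this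
    have hAne : A ≠ [] := by simp [hA, hpune]
    have hA0 : ∀ z ∈ A, z ≠ 0 := by
      intro z hz
      rw [hA] at hz
      obtain ⟨z', -, hz'⟩ := List.mem_map.mp hz
      omega
    have hpv0 : pv = [] ∨ pv.head? = some 0 := by
      rcases eq_or_ne v [] with hvnil | hvne
      · left; rw [hpv, hvnil, phi_nil]
      · right
        apply head?_goodB hGBv
        intro hc
        have := congrArg List.length hc
        rw [hlenv] at this
        exact hvne (List.length_eq_zero_iff.mp this)
    obtain ⟨htwA, hdwA⟩ := takeWhile_spec A pv hA0 hpv0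
    rw [psi_cons 0 (A ++ pv) (by rw [htwA]; exact hAne), htwA, hdwA]
    rw [hA, map_succ_pred]
    rw [hpu, hpv]
    rw [ih (u.map (· - 1)).length (by simp; omega) (u.map (· - 1)) rfl hGNu]
    rw [ih v.length (by omega) v rfl hGNv]
    rw [map_pred_succ u hu0, ← hUV]

lemma phi_psi : ∀ n : ℕ, ∀ w : List ℕ, w.length = n → GoodB w → phi (psi w) = w := by
  intro n
  induction n using Nat.strong_induction_on with
  | _ n ih =>
  intro w hlen hB
  rcases w with _ | ⟨a, t⟩
  · rw [psi_nil, phi_nil]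
  have ha : a = 0 := hB.1.1 a rfl
  subst ha
  obtain ⟨hUV, hu0, hv0⟩ := takeWhile_facts t
  set u := t.takeWhile (· != 0) with hu
  set v := t.dropWhile (· != 0) with hv
  obtain ⟨hGBu, hGBv, hu1, hv1⟩ := goodB_decomp hB hUV hu0 hv0
  have hlt : t.length < n := by simp at hlen; omega
  rcases eq_or_ne u [] with hune | hune
  · have hvt : v = t := by rw [hUV, hune, List.nil_append]
    have hGBt : GoodB t := hvt ▸ hGBv
    rw [psi_cons_empty 0 t (hu ▸ hune)]
    rw [phi_last0' (psi t ++ [0]) (by simp) List.getLast?_concat]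
    rw [List.dropLast_concat]
    rw [ih t.length hlt t rfl hGBt]
  · have huvlen : u.length + v.length = t.length := by rw [hUV, List.length_append]
    have hulen : 0 < u.length := List.length_pos_iff.mpr hune
    obtain ⟨hGNu, hlenu, _, _⟩ := psi_spec (u.map (· - 1)).length (u.map (· - 1)) rfl hGBu
    obtain ⟨hGNv, hlenv, _, _⟩ := psi_spec v.length v rfl hGBv
    have hwinv := (psi_spec (0 :: t).length (0 :: t) rfl hB).2.2.2
    have hth1 : t.head? = some 1 := by
      rw [prefix_head?_eq (⟨v, hUV.symm⟩ : u <+: t) hune]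
      exact hu1 hune
    have hlast : (psi (0 :: t)).getLast? ≠ some 0 := hwinv (by simpa using hth1)
    rw [psi_cons 0 t (hu ▸ hune), ← hu, ← hv] at hlast ⊢
    set pu := psi (u.map (· - 1)) with hpu
    set pv := psi v with hpv
    set A := pu.map (· + 1) with hA
    have hpune : pu ≠ [] := by
      intro hc
      have := congrArg List.length hc
      rw [hlenu] at this
      simp at this
      exact hune this
    have hAne : A ≠ [] := by simp [hA, hpune]
    have hA0 : ∀ z ∈ A, z ≠ 0 := by
      intro z hz
      rw [hA] at hz
      obtain ⟨z', -, hz'⟩ := List.mem_map.mp hz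
      omega
    have hpv0 : pv = [] ∨ pv.head? = some 0 := by
      rcases eq_or_ne v [] with hvnil | hvne
      · left; rw [hpv, hvnil, psi_nil]
      · right
        apply head?_goodN hGNv
        intro hc
        have := congrArg List.length hc
        rw [hlenv] at this
        exact hvne (List.length_eq_zero_iff.mp this)
    obtain ⟨htwA, hdwA⟩ := takeWhile_spec A pv hA0 hpv0
    rw [phi_cons 0 (A ++ pv) hlast, htwA, hdwA]
    rw [hA, map_succ_pred]
    rw [hpu, hpv]
    rw [ih (u.map (· - 1)).length (by simp; omega) (u.map (· - 1)) rfl hGBu]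
    rw [ih v.length (by omega) v rfl hGBv]
    rw [map_pred_succ u hu0, ← hUV]

theorem exists_area_preserving_bijection :
    ∃ f : List ℕ → List ℕ, ∀ n : ℕ,
      Set.BijOn f (BSet n) (NeqCat n) ∧
      ∀ w ∈ BSet n, area (f w) = area w := by
  refine ⟨psi, fun n => ⟨⟨?_, ?_, ?_⟩, ?_⟩⟩
  · -- MapsTo
    intro w hw
    obtain ⟨⟨hlen, hcat, hgg⟩, hasc⟩ := hw
    obtain ⟨hGN, hlen', _, _⟩ := psi_spec w.length w rfl ⟨hcat, hgg, hasc⟩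
    exact ⟨by rw [hlen', hlen], hGN.1, hGN.2⟩
  · -- InjOn
    intro a ha b hb heq
    obtain ⟨⟨hlena, hcata, hgga⟩, hasca⟩ := ha
    obtain ⟨⟨hlenb, hcatb, hggb⟩, hascb⟩ := hb
    calc a = phi (psi a) := (phi_psi a.length a rfl ⟨hcata, hgga, hasca⟩).symm
    _ = phi (psi b) := by rw [heq]
    _ = b := phi_psi b.length b rfl ⟨hcatb, hggb, hascb⟩
  · -- SurjOn
    intro x hx
    obtain ⟨hlen, hcat, hchain⟩ := hx
    obtain ⟨hGB, hlen', _⟩ := phi_spec x.length x rfl ⟨hcat, hchain⟩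
    exact ⟨phi x, ⟨⟨by rw [hlen', hlen], hGB.1, hGB.2.1⟩, hGB.2.2⟩,
      psi_phi x.length x rfl ⟨hcat, hchain⟩⟩
  · -- area preserving
    intro w hw
    obtain ⟨⟨hlen, hcat, hgg⟩, hasc⟩ := hw
    obtain ⟨_, hlen', hsum', _⟩ := psi_spec w.length w rfl ⟨hcat, hgg, hasc⟩
    unfold area
    rw [hlen', hsum']
end

section
/- The sequence p(n) of total numbers of interior points over all (≥,≥)-polyominoes of length n begins 0, 0, 2, 13, 59, 230, 830, 2858, 9547, 31227 for n = 1,...,10. -/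
open Finset

/-- `c(n,k)`: the number of (nonempty) Catalan words of length `n`
avoiding (≥,≥) whose last letter is `k`. -/
def ext' (w : List ℕ) : List (List ℕ) :=
  (List.range (w.getLastD 0 + 2)).map (fun b => w ++ [b])

def gen : ℕ → List (List ℕ)
  | 0 => []
  | 1 => [[0]]
  | n+2 => (gen (n+1)).flatMap ext'

lemma isCat_append_singleton {v : List ℕ} (hv : v ≠ []) (b : ℕ) :
    IsCat (v ++ [b]) ↔ IsCat v ∧ b ≤ v.getLastD 0 + 1 := by
  unfold IsCat
  unfold List.Chain'
  rw [List.isChain_append]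
  have h1 : (v ++ [b]).head? = v.head? := List.head?_append_of_ne_nil _ hv
  have h2 : v.getLast? = some (v.getLastD 0) := by
    cases h : v.getLast? with
    | none => exact absurd (List.getLast?_eq_none_iff.mp h) hv
    | some a => simp [List.getLastD_eq_getLast?, h]
  constructor
  · rintro ⟨hh, hc, -, hlast⟩
    refine ⟨⟨by rw [h1] at hh; exact hh, hc⟩, ?_⟩
    exact hlast _ (by rw [h2]; rfl) b rfl
  · rintro ⟨⟨hh, hc⟩, hb⟩
    refine ⟨by rw [h1]; exact hh, hc, by simp, ?_⟩
    intro x hx y hy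
    rw [h2, Option.mem_def, Option.some_inj] at hx
    simp only [List.head?_cons, Option.mem_def, Option.some_inj] at hy
    omega

lemma gen_mem : ∀ n w, w ∈ gen (n+1) ↔ w.length = n+1 ∧ IsCat w := by
  intro n
  induction n with
  | zero =>
    intro w
    simp only [gen, List.mem_singleton]
    constructor
    · rintro rfl; exact ⟨rfl, fun a h => by simp at h; omega, List.isChain_singleton _⟩
    · rintro ⟨hl, hh, -⟩
      match w, hl with
      | [a], _ => have := hh a rfl; simp [this]
  | succ n ih =>
    intro w
    show w ∈ (gen (n+1)).flatMap ext' ↔ _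
    rw [List.mem_flatMap]
    constructor
    · rintro ⟨v, hv, hw⟩
      obtain ⟨hl, hcat⟩ := (ih v).1 hv
      simp only [ext', List.mem_map, List.mem_range] at hw
      obtain ⟨b, hb, rfl⟩ := hw
      have hvne : v ≠ [] := by intro h; simp [h] at hl
      refine ⟨by simp [hl], (isCat_append_singleton hvne b).2 ⟨hcat, by omega⟩⟩
    · rintro ⟨hl, hcat⟩
      have hwne : w ≠ [] := by intro h; simp [h] at hl
      refine ⟨w.dropLast, ?_, ?_⟩
      · apply (ih _).2
        have hvne : w.dropLast ≠ [] := by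
          intro h
          have := w.length_dropLast
          rw [h] at this; simp at this; omega
        have hdec : w = w.dropLast ++ [w.getLast hwne] := (List.dropLast_append_getLast hwne).symm
        constructor
        · have := w.length_dropLast; omega
        · have := hcat
          rw [hdec] at this
          exact ((isCat_append_singleton hvne _).1 this).1
      · simp only [ext', List.mem_map, List.mem_range]
        refine ⟨w.getLast hwne, ?_, List.dropLast_append_getLast hwne⟩
        have hvne : w.dropLast ≠ [] := by
          intro h
          have := w.length_dropLast
          rw [h] at this; simp at this; omega
        have hdec : w = w.dropLast ++ [w.getLast hwne] := (List.dropLast_append_getLast hwne).symm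
        have := hcat
        rw [hdec] at this
        have := ((isCat_append_singleton hvne _).1 this).2
        omega

def avoidB : List ℕ → Bool
  | a :: b :: c :: t => (!(decide (b ≤ a) && decide (c ≤ b))) && avoidB (b :: c :: t)
  | _ => true

lemma avoid_short {w : List ℕ} (h : w.length < 3) : AvoidGG w := by
  intro a b c hinf
  have := hinf.length_le
  simp at this; omega

lemma prefix_triple {x y z a b c : ℕ} {t : List ℕ} :
    [x, y, z] <+: a :: b :: c :: t ↔ x = a ∧ y = b ∧ z = c := by
  constructor
  · intro h
    rw [List.cons_prefix_cons] at h
    obtain ⟨rfl, h⟩ := h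
    rw [List.cons_prefix_cons] at h
    obtain ⟨rfl, h⟩ := h
    rw [List.cons_prefix_cons] at h
    exact ⟨rfl, rfl, h.1⟩
  · rintro ⟨rfl, rfl, rfl⟩
    exact ⟨t, rfl⟩

lemma avoid_cons3 {a b c : ℕ} {t : List ℕ} :
    AvoidGG (a :: b :: c :: t) ↔ ¬(b ≤ a ∧ c ≤ b) ∧ AvoidGG (b :: c :: t) := by
  constructor
  · intro h
    refine ⟨h a b c ⟨[], t, rfl⟩, ?_⟩
    · intro x y z hinf
      exact h x y z ((List.infix_cons_iff).2 (Or.inr hinf))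
  · rintro ⟨h1, h2⟩ x y z hinf
    rw [List.infix_cons_iff] at hinf
    rcases hinf with h | h
    · obtain ⟨rfl, rfl, rfl⟩ := prefix_triple.1 h
      exact h1
    · exact h2 x y z h

lemma avoid_iff : ∀ w : List ℕ, AvoidGG w ↔ avoidB w = true := by
  intro w
  induction w with
  | nil => simp [avoidB, avoid_short]
  | cons a l ih =>
    match l, ih with
    | [], _ => simp [avoidB]; exact avoid_short (by simp)
    | [b], _ => simp [avoidB]; exact avoid_short (by simp)
    | b :: c :: t, ih =>
      rw [avoid_cons3, show avoidB (a :: b :: c :: t) =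
        ((!(decide (b ≤ a) && decide (c ≤ b))) && avoidB (b :: c :: t)) from rfl,
        Bool.and_eq_true, ← ih]
      constructor <;> rintro ⟨h1, h2⟩ <;> exact ⟨by simp at h1 ⊢; omega, h2⟩

lemma gen_nodup : ∀ n, (gen n).Nodup := by
  intro n
  match n with
  | 0 => simp [gen]
  | 1 => simp [gen]
  | n+2 =>
    show ((gen (n+1)).flatMap ext').Nodup
    rw [List.nodup_flatMap]
    constructor
    · intro v _
      apply List.Nodup.map
      · intro b b' h
        simpa using List.append_inj_right h rfl
      · exact List.nodup_range
    · have hnd := gen_nodup (n+1)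
      refine hnd.imp_of_mem ?_
      intro v v' hv hv' hne w hw hw'
      simp only [ext', List.mem_map, List.mem_range] at hw hw'
      obtain ⟨b, -, rfl⟩ := hw
      obtain ⟨b', -, h⟩ := hw'
      have hl : v.length = v'.length := by
        rw [((gen_mem n v).1 hv).1, ((gen_mem n v').1 hv').1]
      exact hne (List.append_inj_left h.symm hl)

def LL (n : ℕ) : List (List ℕ) := (gen n).filter (fun w => avoidB w)

def FF (n : ℕ) : Finset (List ℕ) := ⟨(LL n : Multiset (List ℕ)), by
  rw [Multiset.coe_nodup]; exact (gen_nodup n).filter _⟩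

lemma catGG_eq (n : ℕ) : CatGG (n+1) = ↑(FF (n+1)) := by
  ext w
  simp only [FF, Finset.mem_coe, Finset.mem_mk, Set.mem_setOf_eq, Multiset.mem_coe, LL, List.mem_filter,
    CatGG, gen_mem, avoid_iff]
  tauto

lemma key (n : ℕ) : (∑ᶠ w ∈ CatGG (n+1), interPts w) = ((LL (n+1)).map interPts).sum := by
  rw [catGG_eq, finsum_mem_coe_finset]
  rfl



def genFrom : ℕ → List ℕ → List (List ℕ)
  | 0, v => [v]
  | f+1, v => (ext' v).flatMap (genFrom f)

lemma genFrom_succ (f : ℕ) (v : List ℕ) :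
    genFrom (f+1) v = (genFrom f v).flatMap ext' := by
  induction f generalizing v with
  | zero => simp [genFrom]
  | succ f ih =>
    show (ext' v).flatMap (genFrom (f+1)) = _
    calc (ext' v).flatMap (genFrom (f+1))
        = (ext' v).flatMap (fun u => (genFrom f u).flatMap ext') := by
          show (ext' v).flatMap (fun u => genFrom (f+1) u) = _
          simp only [ih]
      _ = ((ext' v).flatMap (genFrom f)).flatMap ext' := List.flatMap_assoc.symm
      _ = (genFrom (f+1) v).flatMap ext' := rfl

lemma gen_eq_genFrom : ∀ n, gen (n+1) = genFrom n [0] := by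
  intro n
  induction n with
  | zero => rfl
  | succ n ih =>
    show (gen (n+1)).flatMap ext' = _
    rw [ih, ← genFrom_succ]

def T : ℕ → List ℕ → ℕ
  | 0, v => if avoidB v then interPts v else 0
  | f+1, v => ((List.range (v.getLastD 0 + 2)).map (fun b => T f (v ++ [b]))).sum

lemma sum_map_flatMap {α : Type} (l : List α) (g : α → List ℕ) :
    (l.flatMap g).sum = (l.map (fun x => (g x).sum)).sum := by
  induction l with
  | nil => rfl
  | cons x t ih => simp [List.flatMap_cons, ih]

lemma T_eq (f : ℕ) : ∀ v, T f v = (((genFrom f v).filter (fun w => avoidB w)).map interPts).sum := by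
  induction f with
  | zero =>
    intro v
    show (if avoidB v then interPts v else 0) = _
    rw [show genFrom 0 v = [v] from rfl]
    cases h : avoidB v <;> simp [List.filter, h]
  | succ f ih =>
    intro v
    show ((List.range (v.getLastD 0 + 2)).map (fun b => T f (v ++ [b]))).sum = _
    rw [show genFrom (f+1) v = (ext' v).flatMap (genFrom f) from rfl,
      List.filter_flatMap, List.map_flatMap]
    rw [sum_map_flatMap]
    simp only [ext', List.map_map]
    congr 1
    apply List.map_congr_left
    intro b _
    exact ih (v ++ [b])

lemma total_eq (n : ℕ) : (∑ᶠ w ∈ CatGG (n+1), interPts w) = T n [0] := by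
  rw [key, T_eq, ← gen_eq_genFrom]
  rfl

set_option maxRecDepth 100000 in
set_option maxHeartbeats 10000000 in
theorem total_interior_points_values :
    (∑ᶠ w ∈ CatGG 1, interPts w) = 0 ∧
    (∑ᶠ w ∈ CatGG 2, interPts w) = 0 ∧
    (∑ᶠ w ∈ CatGG 3, interPts w) = 2 ∧
    (∑ᶠ w ∈ CatGG 4, interPts w) = 13 ∧
    (∑ᶠ w ∈ CatGG 5, interPts w) = 59 ∧
    (∑ᶠ w ∈ CatGG 6, interPts w) = 230 ∧
    (∑ᶠ w ∈ CatGG 7, interPts w) = 830 ∧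
    (∑ᶠ w ∈ CatGG 8, interPts w) = 2858 ∧
    (∑ᶠ w ∈ CatGG 9, interPts w) = 9547 ∧
    (∑ᶠ w ∈ CatGG 10, interPts w) = 31227 := by
  refine ⟨?_, ?_, ?_, ?_, ?_, ?_, ?_, ?_, ?_, ?_⟩
  · rw [total_eq 0]; decide
  · rw [total_eq 1]; decide
  · rw [total_eq 2]; decide
  · rw [total_eq 3]; decide
  · rw [total_eq 4]; decide
  · rw [total_eq 5]; decide
  · rw [total_eq 6]; decide
  · rw [total_eq 7]; decide
  · rw [total_eq 8]; decide
  · rw [total_eq 9]; decide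
end
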